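/- arXiv:2404.11083 — 5 statements merged into one kernel-verified Lean document; each statement's English description precedes it below -/
import Mathlib

section
/- Fix an integer d ≥ 1 and M ∈ (0,∞). Let f : [0,1]^d → ℝ and let (f_n) be a sequence of functions [0,1]^d → ℝ with ‖f_n − f‖_∞ → 0 as n → ∞. If f_n ∈ D^d_M for every n, then f ∈ D^d_M. -/
open MeasureTheory Filter Set
open scoped ENNReal NNReal

noncomputable section

namespace HAL

/-- The quadrant `Q_a(u)` inside the unit cube. -/
def quadrant (d : ℕ) (a : Fin d → Bool) (u : Fin d → ℝ) : Set (Fin d → ℝ) :=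
  {y | ∀ k, if a k then u k ≤ y k ∧ y k ≤ 1 else 0 ≤ y k ∧ y k < u k}

/-- Multivariate càdlàg on the unit cube. -/
def IsCadlag (d : ℕ) (f : (Fin d → ℝ) → ℝ) : Prop :=
  ∀ u ∈ Set.Icc (0 : Fin d → ℝ) 1, ∀ a : Fin d → Bool,
    ∀ x : ℕ → (Fin d → ℝ), (∀ n, x n ∈ quadrant d a u) →
      Filter.Tendsto x Filter.atTop (nhds u) →
      ∃ L : ℝ, Filter.Tendsto (fun n => f (x n)) Filter.atTop (nhds L) ∧
        ((∀ k, a k = true) → L = f u)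

/-- A grid partition of the face `(0_s, 1_s]` (coordinates outside `s` fixed at `0`). -/
structure SectionGrid (d : ℕ) (s : Finset (Fin d)) where
  L : Fin d → ℕ
  t : Fin d → ℕ → ℝ
  Lpos : ∀ k, 0 < L k
  Lout : ∀ k, k ∉ s → L k = 1
  t0 : ∀ k, t k 0 = 0
  tlast : ∀ k, t k (L k) = 1
  tmono : ∀ k, ∀ i, i < L k → t k i < t k (i + 1)

/-- The vertex of the box indexed by `j` corresponding to the subset `e ⊆ s`. -/
def gridVertex {d : ℕ} {s : Finset (Fin d)} (G : SectionGrid d s) (j : Fin d → ℕ)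
    (e : Finset (Fin d)) : Fin d → ℝ :=
  fun k => if k ∈ s then (if k ∈ e then G.t k (j k) else G.t k (j k - 1)) else 0

/-- The quasi-volume `Δ(f_s; A)` of the box of the grid `G` indexed by `j`. -/
def boxQuasiVolume {d : ℕ} (f : (Fin d → ℝ) → ℝ) {s : Finset (Fin d)}
    (G : SectionGrid d s) (j : Fin d → ℕ) : ℝ :=
  ∑ e ∈ s.powerset, (-1 : ℝ) ^ (s.card - e.card) * f (gridVertex G j e)

/-- `∑_{A ∈ P} |Δ(f_s; A)|` for the grid partition `G`. -/
def gridVariationSum {d : ℕ} (f : (Fin d → ℝ) → ℝ) {s : Finset (Fin d)}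
    (G : SectionGrid d s) : ℝ :=
  ∑ j ∈ Fintype.piFinset (fun k => Finset.Icc 1 (G.L k)), |boxQuasiVolume f G j|

/-- The Vitali variation `V(f_s)` of the section `f_s` of `f`. -/
def sectionVitali (d : ℕ) (f : (Fin d → ℝ) → ℝ) (s : Finset (Fin d)) : ℝ≥0∞ :=
  ⨆ G : SectionGrid d s, ENNReal.ofReal (gridVariationSum f G)

/-- The sectional variation norm `‖f‖_v = |f(0)| + ∑_{∅ ≠ s} V(f_s)`. -/
def svn (d : ℕ) (f : (Fin d → ℝ) → ℝ) : ℝ≥0∞ :=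
  ENNReal.ofReal |f 0| +
    ∑ s ∈ (Finset.univ : Finset (Fin d)).powerset.erase ∅, sectionVitali d f s

/-- `D^d_M`: càdlàg functions with sectional variation norm at most `M`. -/
def Dset (d : ℕ) (M : ℝ) : Set ((Fin d → ℝ) → ℝ) :=
  {f | IsCadlag d f ∧ svn d f ≤ ENNReal.ofReal M}

/-- The indicator `1_{[y, 1]}` of the upper box `[y, 1]`. -/
def upperBoxIndicator (d : ℕ) (y : Fin d → ℝ) : (Fin d → ℝ) → ℝ :=
  (Set.Icc y 1).indicator (fun _ => (1 : ℝ))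

/-- The span of `F^d = {1_{[y,1]} : y ∈ [0,1]^d}`. -/
def spanF (d : ℕ) : Submodule ℝ ((Fin d → ℝ) → ℝ) :=
  Submodule.span ℝ {g | ∃ y ∈ Set.Icc (0 : Fin d → ℝ) 1, g = upperBoxIndicator d y}

/-- `R^d_M`: elements of the span of upper-box indicators with `‖·‖_v ≤ M`. -/
def Rset (d : ℕ) (M : ℝ) : Set ((Fin d → ℝ) → ℝ) :=
  {f | f ∈ spanF d ∧ svn d f ≤ ENNReal.ofReal M}

end HAL

/-!
Every one-sided limit `lim f(x_k)` along a quadrant is a uniform limit of the corresponding limits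
for `f_n`, so it exists, and it equals `f(u)` when the `f_n`'s limits are `f_n(u)`. The sectional
variation norm is a supremum of finite sums `|f(0)| + ∑_s ∑_A |Δ(f_s; A)|`, each of which is a
finite combination of values of `f` on the cube and hence a continuous function of `f` for
pointwise convergence; a bound `≤ M` on every such sum therefore passes to the limit.
-/

open Topology

theorem TendstoUniformly.exists_tendsto_of_tendsto {α β : Type*} [PseudoMetricSpace β]
    [CompleteSpace β] {l : Filter α} [l.NeBot] {G : ℕ → α → β} {g : α → β} {L : ℕ → β}
    (hG : TendstoUniformly G g atTop) (hL : ∀ n, Tendsto (G n) l (𝓝 (L n))) :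
    ∃ ℓ, Tendsto L atTop (𝓝 ℓ) ∧ Tendsto g l (𝓝 ℓ) := by
  have hcauchy : CauchySeq L := by
    refine Metric.cauchySeq_iff.2 fun ε hε => ?_
    obtain ⟨N, hN⟩ := eventually_atTop.1 (Metric.tendstoUniformly_iff.1 hG (ε / 4) (by positivity))
    refine ⟨N, fun m hm n hn => ?_⟩
    have hclose : ∀ x, dist (G m x) (G n x) ≤ ε / 2 := fun x => by
      linarith [dist_triangle_left (G m x) (G n x) (g x), hN m hm x, hN n hn x]
    exact (le_of_tendsto ((hL m).dist (hL n)) (Eventually.of_forall hclose)).trans_lt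
      (half_lt_self hε)
  obtain ⟨ℓ, hℓ⟩ := cauchySeq_tendsto_of_complete hcauchy
  exact ⟨ℓ, hℓ, hG.tendsto_of_eventually_tendsto (Eventually.of_forall hL) hℓ⟩

namespace HAL

variable {d : ℕ}

theorem quadrant_subset_Icc {a : Fin d → Bool} {u : Fin d → ℝ} (hu : u ∈ Icc 0 1) :
    quadrant d a u ⊆ Icc 0 1 := by
  intro y hy
  refine ⟨fun k => ?_, fun k => ?_⟩ <;> have hyk := hy k <;> split_ifs at hyk
  · exact (hu.1 k).trans hyk.1
  · exact hyk.1
  · exact hyk.2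
  · exact hyk.2.le.trans (hu.2 k)

theorem IsCadlag.of_tendstoUniformlyOn {F : ℕ → (Fin d → ℝ) → ℝ} {f : (Fin d → ℝ) → ℝ}
    (hF : ∀ n, IsCadlag d (F n)) (hFf : TendstoUniformlyOn F f atTop (Icc 0 1)) :
    IsCadlag d f := by
  intro u hu a x hx hxu
  choose L hL hLu using fun n => hF n u hu a x hx hxu
  have hunif : TendstoUniformly (fun n => F n ∘ x) (f ∘ x) atTop :=
    tendstoUniformlyOn_univ.1 <| (hFf.comp x).mono fun k _ => quadrant_subset_Icc hu (hx k)
  obtain ⟨ℓ, hLℓ, hfℓ⟩ := hunif.exists_tendsto_of_tendsto hL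
  exact ⟨ℓ, hfℓ, fun ha => tendsto_nhds_unique hLℓ <|
    (hFf.tendsto_at hu).congr fun n => (hLu n ha).symm⟩

instance {s : Finset (Fin d)} : Nonempty (SectionGrid d s) :=
  ⟨{ L := fun _ => 1
     t := fun _ i => if i = 0 then 0 else 1
     Lpos := fun _ => one_pos
     Lout := fun _ _ => rfl
     t0 := fun _ => rfl
     tlast := fun _ => by simp
     tmono := fun _ i hi => by simp [Nat.lt_one_iff.1 hi] }⟩

namespace SectionGrid

variable {s : Finset (Fin d)} (G : SectionGrid d s)

theorem strictMonoOn_t (k : Fin d) : StrictMonoOn (G.t k) (Iic (G.L k)) :=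
  strictMonoOn_Iic_of_lt_succ fun i hi => by simpa using G.tmono k i hi

theorem t_mem_Icc {k : Fin d} {i : ℕ} (hi : i ≤ G.L k) : G.t k i ∈ Icc 0 1 := by
  constructor
  · simpa only [G.t0] using (G.strictMonoOn_t k).monotoneOn (Nat.zero_le _) hi (Nat.zero_le i)
  · simpa only [G.tlast] using (G.strictMonoOn_t k).monotoneOn hi (mem_Iic.2 le_rfl) hi

theorem gridVertex_mem_Icc {j : Fin d → ℕ} (hj : ∀ k, j k ≤ G.L k) (e : Finset (Fin d)) :
    gridVertex G j e ∈ Icc 0 1 := by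
  have hmem : ∀ k, gridVertex G j e k ∈ Icc 0 1 := fun k => by
    unfold gridVertex
    split_ifs
    · exact G.t_mem_Icc (hj k)
    · exact G.t_mem_Icc ((Nat.sub_le _ _).trans (hj k))
    · exact ⟨le_rfl, zero_le_one⟩
  exact ⟨fun k => (hmem k).1, fun k => (hmem k).2⟩

end SectionGrid

theorem gridVariationSum_nonneg (f : (Fin d → ℝ) → ℝ) {s : Finset (Fin d)}
    (G : SectionGrid d s) : 0 ≤ gridVariationSum f G :=
  Finset.sum_nonneg fun _ _ => abs_nonneg _

def sectionalGridSum (f : (Fin d → ℝ) → ℝ) (c : ∀ s : Finset (Fin d), SectionGrid d s) : ℝ :=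
  |f 0| + ∑ s ∈ (Finset.univ : Finset (Fin d)).powerset.erase ∅, gridVariationSum f (c s)

theorem svn_eq_iSup_sectionalGridSum (f : (Fin d → ℝ) → ℝ) :
    svn d f = ⨆ c, ENNReal.ofReal (sectionalGridSum f c) := by
  set φ : ∀ {s : Finset (Fin d)}, SectionGrid d s → ℝ≥0∞ :=
    fun G => ENNReal.ofReal (gridVariationSum f G)
  have hsection : ∀ s, ⨆ G : SectionGrid d s, φ G = ⨆ c : ∀ s, SectionGrid d s, φ (c s) :=
    fun s => ((Function.surjective_eval s).iSup_comp _).symm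
  -- grids can be chosen independently for the different sections
  have hdirected : ∀ c c' : ∀ s, SectionGrid d s, ∃ c'' : ∀ s, SectionGrid d s,
      ∀ s, φ (c s) ≤ φ (c'' s) ∧ φ (c' s) ≤ φ (c'' s) := fun c c' =>
    ⟨fun s => if φ (c s) ≤ φ (c' s) then c' s else c s, fun s => by
      dsimp only
      split_ifs with h
      exacts [⟨h, le_rfl⟩, ⟨le_rfl, (not_le.1 h).le⟩]⟩
  unfold svn sectionVitali
  rw [Finset.sum_congr rfl fun s _ => hsection s, ENNReal.finsetSum_iSup hdirected,
    ENNReal.add_iSup]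
  refine iSup_congr fun c => ?_
  rw [sectionalGridSum, ENNReal.ofReal_add (abs_nonneg _)
    (Finset.sum_nonneg fun s _ => gridVariationSum_nonneg _ _),
    ENNReal.ofReal_sum_of_nonneg fun s _ => gridVariationSum_nonneg _ _]

theorem svn_le_ofReal_iff {f : (Fin d → ℝ) → ℝ} {M : ℝ} (hM : 0 ≤ M) :
    svn d f ≤ ENNReal.ofReal M ↔ ∀ c, sectionalGridSum f c ≤ M := by
  simp only [svn_eq_iSup_sectionalGridSum, iSup_le_iff, ENNReal.ofReal_le_ofReal_iff hM]

section PointwiseLimit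

variable {ι : Type*} {l : Filter ι} {F : ι → (Fin d → ℝ) → ℝ} {f : (Fin d → ℝ) → ℝ}

theorem tendsto_gridVariationSum (hFf : ∀ x ∈ Icc 0 1, Tendsto (fun n => F n x) l (𝓝 (f x)))
    {s : Finset (Fin d)} (G : SectionGrid d s) :
    Tendsto (fun n => gridVariationSum (F n) G) l (𝓝 (gridVariationSum f G)) := by
  refine tendsto_finsetSum _ fun j hj => (tendsto_finsetSum _ fun e _ => ?_).abs
  have hjL : ∀ k, j k ≤ G.L k := fun k => (Finset.mem_Icc.1 (Fintype.mem_piFinset.1 hj k)).2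
  exact (hFf _ (G.gridVertex_mem_Icc hjL e)).const_mul _

theorem tendsto_sectionalGridSum (hFf : ∀ x ∈ Icc 0 1, Tendsto (fun n => F n x) l (𝓝 (f x)))
    (c : ∀ s : Finset (Fin d), SectionGrid d s) :
    Tendsto (fun n => sectionalGridSum (F n) c) l (𝓝 (sectionalGridSum f c)) :=
  (hFf 0 ⟨le_rfl, zero_le_one⟩).abs.add <|
    tendsto_finsetSum _ fun s _ => tendsto_gridVariationSum hFf (c s)

theorem svn_le_ofReal_of_tendsto [l.NeBot] {M : ℝ} (hM : 0 ≤ M)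
    (hFf : ∀ x ∈ Icc 0 1, Tendsto (fun n => F n x) l (𝓝 (f x)))
    (hF : ∀ᶠ n in l, svn d (F n) ≤ ENNReal.ofReal M) : svn d f ≤ ENNReal.ofReal M :=
  (svn_le_ofReal_iff hM).2 fun c => le_of_tendsto (tendsto_sectionalGridSum hFf c) <|
    hF.mono fun _ hn => (svn_le_ofReal_iff hM).1 hn c

end PointwiseLimit

end HAL

theorem cadlag_bounded_variation_closed_under_uniform_limits_general
    (d : ℕ) (M : ℝ) (hM : 0 < M)
    (f : (Fin d → ℝ) → ℝ) (F : ℕ → (Fin d → ℝ) → ℝ)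
    (hmem : ∀ n, F n ∈ HAL.Dset d M)
    (hconv : ∀ ε > (0 : ℝ), ∃ N : ℕ, ∀ n ≥ N,
      ∀ x ∈ Set.Icc (0 : Fin d → ℝ) 1, |F n x - f x| ≤ ε) :
    f ∈ HAL.Dset d M := by
  have hFf : TendstoUniformlyOn F f atTop (Icc 0 1) := by
    refine Metric.tendstoUniformlyOn_iff.2 fun ε hε => ?_
    obtain ⟨N, hN⟩ := hconv (ε / 2) (half_pos hε)
    filter_upwards [eventually_ge_atTop N] with n hn x hx
    rw [dist_comm, Real.dist_eq]
    exact (hN n hn x hx).trans_lt (half_lt_self hε)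
  exact ⟨HAL.IsCadlag.of_tendstoUniformlyOn (fun n => (hmem n).1) hFf,
    HAL.svn_le_ofReal_of_tendsto hM.le (fun x hx => hFf.tendsto_at hx)
      (Eventually.of_forall fun n => (hmem n).2)⟩

/-- If `f_n ∈ D^d_M` for every `n` and `‖f_n − f‖_∞ → 0` (uniform convergence
on the unit cube), then `f ∈ D^d_M`. -/
theorem cadlag_bounded_variation_closed_under_uniform_limits
    (d : ℕ) (hd : 1 ≤ d) (M : ℝ) (hM : 0 < M)
    (f : (Fin d → ℝ) → ℝ) (F : ℕ → (Fin d → ℝ) → ℝ)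
    (hmem : ∀ n, F n ∈ HAL.Dset d M)
    (hconv : ∀ ε > (0 : ℝ), ∃ N : ℕ, ∀ n ≥ N,
      ∀ x ∈ Set.Icc (0 : Fin d → ℝ) 1, |F n x - f x| ≤ ε) :
    f ∈ HAL.Dset d M :=
  cadlag_bounded_variation_closed_under_uniform_limits_general d M hM f F hmem hconv
end
end

section
/- Fix an integer d ≥ 1 and M ∈ (0,∞). Then D^d_M equals the closure of R^d_M with respect to the supremum norm on bounded functions [0,1]^d → ℝ; that is, R^d_M ⊆ D^d_M, and for every f ∈ D^d_M there exists a sequence f_n ∈ R^d_M with ‖f − f_n‖_∞ → 0. -/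
open MeasureTheory Filter Set
open scoped ENNReal NNReal

noncomputable section

namespace HAL

section Aux
open Finset
variable {d : ℕ}

lemma isCadlag_indicator (d : ℕ) (y : Fin d → ℝ) :
    IsCadlag d (upperBoxIndicator d y) := by
  intro u hu a x hx hxu
  classical
  set c : ℝ := if (∀ k, if a k then y k ≤ u k else y k < u k) then 1 else 0 with hc
  have hcoordt : ∀ k, Tendsto (fun n => x n k) atTop (nhds (u k)) := fun k =>
    ((continuous_apply k).tendsto u).comp hxu
  have hcoord : ∀ k, ∀ᶠ n in atTop,
      ((y k ≤ x n k ∧ x n k ≤ 1) ↔ (if a k then y k ≤ u k else y k < u k)) := by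
    intro k
    by_cases hak : a k
    · simp only [hak, if_true]
      by_cases hyu : y k ≤ u k
      · filter_upwards with n
        have h1 := hx n k; simp only [hak, if_true] at h1
        simp [hyu, le_trans hyu h1.1, h1.2]
      · push_neg at hyu
        filter_upwards [(hcoordt k).eventually_lt_const hyu] with n hn
        have h1 := hx n k; simp only [hak, if_true] at h1
        simp only [iff_false, not_and, hyu.not_ge]
        intro h
        exact absurd (lt_of_le_of_lt h hn) (lt_irrefl _)
    · simp only [hak, if_false, Bool.false_eq_true] -- a k = false
      by_cases hyu : y k < u k
      · filter_upwards [(hcoordt k).eventually_const_lt hyu] with n hn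
        have h1 := hx n k; simp only [hak, if_false, Bool.false_eq_true] at h1
        constructor
        · intro _; exact hyu
        · intro _
          exact ⟨le_of_lt hn, le_trans (le_of_lt h1.2) (hu.2 k)⟩
      · push_neg at hyu
        filter_upwards with n
        have h1 := hx n k; simp only [hak, if_false, Bool.false_eq_true] at h1
        constructor
        · intro h
          exact absurd (lt_of_lt_of_le h1.2 hyu) (not_lt.2 h.1)
        · intro h; exact absurd h (not_lt.2 hyu)
  have hev : ∀ᶠ n in atTop, upperBoxIndicator d y (x n) = c := by
    filter_upwards [Filter.eventually_all.2 hcoord] with n hn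
    have hmem : (x n ∈ Set.Icc y 1) ↔ (∀ k, if a k then y k ≤ u k else y k < u k) := by
      rw [Set.mem_Icc, Pi.le_def, Pi.le_def, ← forall_and]
      exact forall_congr' hn
    rw [upperBoxIndicator, Set.indicator_apply, hc]
    by_cases hall : ∀ k, if a k then y k ≤ u k else y k < u k
    · rw [if_pos (hmem.2 hall), if_pos hall]
    · rw [if_neg (fun h => hall (hmem.1 h)), if_neg hall]
  refine ⟨c, Tendsto.congr' (hev.mono fun n h => h.symm) tendsto_const_nhds, ?_⟩
  intro hall
  have hmemu : (u ∈ Set.Icc y 1) ↔ (∀ k, if a k then y k ≤ u k else y k < u k) := by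
    rw [Set.mem_Icc, Pi.le_def, Pi.le_def]
    constructor
    · intro ⟨h1, h2⟩ k; simp [hall k, h1 k]
    · intro h
      exact ⟨fun k => by have := h k; simpa [hall k] using this, fun k => hu.2 k⟩
  rw [hc, upperBoxIndicator, Set.indicator_apply]
  by_cases hall2 : ∀ k, if a k then y k ≤ u k else y k < u k
  · rw [if_pos hall2, if_pos (hmemu.2 hall2)]
  · rw [if_neg hall2, if_neg (fun h => hall2 (hmemu.1 h))]

lemma isCadlag_spanF {d : ℕ} {g : (Fin d → ℝ) → ℝ} (hg : g ∈ spanF d) :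
    IsCadlag d g := by
  induction hg using Submodule.span_induction with
  | mem g hgmem =>
    obtain ⟨y, _, rfl⟩ := hgmem
    exact isCadlag_indicator d y
  | zero =>
    intro u hu a x hx hxu
    exact ⟨0, by simpa using tendsto_const_nhds, fun _ => rfl⟩
  | add p q hp hq hp' hq' =>
    intro u hu a x hx hxu
    obtain ⟨Lp, hLp, hLp'⟩ := hp' u hu a x hx hxu
    obtain ⟨Lq, hLq, hLq'⟩ := hq' u hu a x hx hxu
    exact ⟨Lp + Lq, by simpa using hLp.add hLq,
      fun h => by simp [hLp' h, hLq' h]⟩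
  | smul r p hp hp' =>
    intro u hu a x hx hxu
    obtain ⟨Lp, hLp, hLp'⟩ := hp' u hu a x hx hxu
    exact ⟨r * Lp, by simpa using hLp.const_mul r, fun h => by simp [hLp' h]⟩


variable (V : Finset ℝ)

/-- monotone enumeration of a finite set of reals -/
def en (i : ℕ) : ℝ :=
  if h : i < V.card then ((V.orderIsoOfFin rfl) ⟨i, h⟩ : ℝ) else 1

/-- index of an element in the monotone enumeration -/
def idx (x : ℝ) : ℕ :=
  if h : x ∈ V then (((V.orderIsoOfFin rfl).symm ⟨x, h⟩ : Fin V.card) : ℕ) else 0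

/-- round down into the finite set -/
def rnd (x : ℝ) : ℝ :=
  if h : (V.filter (· ≤ x)).Nonempty then (V.filter (· ≤ x)).max' h else 0

variable {V}

lemma en_mem {i : ℕ} (h : i < V.card) : en V i ∈ V := by
  rw [en, dif_pos h]; exact ((V.orderIsoOfFin rfl) ⟨i, h⟩).2

lemma en_lt_en {i i' : ℕ} (h : i < i') (h' : i' < V.card) : en V i < en V i' := by
  rw [en, en, dif_pos h', dif_pos (h.trans h')]
  exact_mod_cast (V.orderIsoOfFin rfl).strictMono (by exact h)

lemma en_le_en {i i' : ℕ} (h : i ≤ i') (h' : i' < V.card) : en V i ≤ en V i' := by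
  rcases eq_or_lt_of_le h with rfl | hlt
  · exact le_rfl
  · exact le_of_lt (en_lt_en hlt h')

lemma idx_lt_card {x : ℝ} (h : x ∈ V) : idx V x < V.card := by
  rw [idx, dif_pos h]; exact ((V.orderIsoOfFin rfl).symm ⟨x, h⟩).2

lemma en_idx {x : ℝ} (h : x ∈ V) : en V (idx V x) = x := by
  have hi : idx V x = (((V.orderIsoOfFin rfl).symm ⟨x, h⟩ : Fin V.card) : ℕ) := by
    rw [idx, dif_pos h]
  rw [hi, en, dif_pos ((V.orderIsoOfFin rfl).symm ⟨x, h⟩).isLt]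
  simp

lemma idx_en {i : ℕ} (h : i < V.card) : idx V (en V i) = i := by
  have h1 := en_idx (en_mem h)
  rcases lt_trichotomy (idx V (en V i)) i with hlt | heq | hgt
  · have := en_lt_en hlt h
    rw [h1] at this
    exact absurd this (lt_irrefl _)
  · exact heq
  · have := en_lt_en hgt (idx_lt_card (en_mem h))
    rw [h1] at this
    exact absurd this (lt_irrefl _)

lemma idx_lt_idx {x y : ℝ} (hx : x ∈ V) (hy : y ∈ V) (hxy : x < y) :
    idx V x < idx V y := by
  by_contra hcon
  push_neg at hcon
  have := en_le_en hcon (idx_lt_card hx)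
  rw [en_idx hx, en_idx hy] at this
  exact absurd hxy (not_lt.2 this)

lemma idx_le_idx {x y : ℝ} (hx : x ∈ V) (hy : y ∈ V) (hxy : x ≤ y) :
    idx V x ≤ idx V y := by
  rcases eq_or_lt_of_le hxy with rfl | h
  · exact le_rfl
  · exact le_of_lt (idx_lt_idx hx hy h)

lemma two_le_card (h0 : (0:ℝ) ∈ V) (h1 : (1:ℝ) ∈ V) : 2 ≤ V.card :=
  Finset.one_lt_card.2 ⟨0, h0, 1, h1, by norm_num⟩

lemma idx_zero_eq (h0 : (0:ℝ) ∈ V) (hsub : ∀ x ∈ V, x ∈ Set.Icc (0:ℝ) 1) :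
    idx V 0 = 0 := by
  by_contra h
  have hlt : 0 < idx V 0 := Nat.pos_of_ne_zero h
  have := en_lt_en hlt (idx_lt_card h0)
  rw [en_idx h0] at this
  have h2 : en V 0 ∈ V := en_mem (lt_of_le_of_lt (Nat.zero_le _) (idx_lt_card h0))
  exact absurd (hsub _ h2).1 (not_le.2 this)

lemma en_zero (h0 : (0:ℝ) ∈ V) (hsub : ∀ x ∈ V, x ∈ Set.Icc (0:ℝ) 1) :
    en V 0 = 0 := by
  have := idx_zero_eq h0 hsub
  rw [← this, en_idx h0]

lemma idx_one_eq (h1 : (1:ℝ) ∈ V) (hsub : ∀ x ∈ V, x ∈ Set.Icc (0:ℝ) 1) :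
    idx V 1 = V.card - 1 := by
  have hlt := idx_lt_card h1
  rcases eq_or_lt_of_le (Nat.le_sub_one_of_lt hlt) with h | h
  · exact h
  · exfalso
    have hc : V.card - 1 < V.card := Nat.sub_lt (by omega) one_pos
    have := en_lt_en h hc
    rw [en_idx h1] at this
    exact absurd (hsub _ (en_mem hc)).2 (not_le.2 this)

lemma en_last (h1 : (1:ℝ) ∈ V) (hsub : ∀ x ∈ V, x ∈ Set.Icc (0:ℝ) 1) :
    en V (V.card - 1) = 1 := by
  rw [← idx_one_eq h1 hsub, en_idx h1]

lemma idx_consec {x y : ℝ} (hx : x ∈ V) (hy : y ∈ V) (hxy : x < y)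
    (hbtw : ∀ v ∈ V, v ≤ x ∨ y ≤ v) : idx V y = idx V x + 1 := by
  have hAB := idx_lt_idx hx hy hxy
  rcases eq_or_lt_of_le (Nat.succ_le_of_lt hAB) with h | h
  · exact h.symm
  · exfalso
    have hcard : idx V x + 1 < V.card := lt_trans h (idx_lt_card hy)
    have hv : en V (idx V x + 1) ∈ V := en_mem hcard
    rcases hbtw _ hv with hle | hge
    · have := en_lt_en (Nat.lt_succ_self _) hcard
      rw [en_idx hx] at this
      exact absurd hle (not_le.2 this)
    · have := en_lt_en h (idx_lt_card hy)
      rw [en_idx hy] at this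
      exact absurd hge (not_le.2 this)

lemma rnd_mem (h0 : (0:ℝ) ∈ V) {x : ℝ} (hx : 0 ≤ x) : rnd V x ∈ V := by
  have hne : (V.filter (· ≤ x)).Nonempty := ⟨0, Finset.mem_filter.2 ⟨h0, hx⟩⟩
  rw [rnd, dif_pos hne]
  exact Finset.mem_of_mem_filter _ ((V.filter (· ≤ x)).max'_mem hne)

lemma rnd_le (h0 : (0:ℝ) ∈ V) {x : ℝ} (hx : 0 ≤ x) : rnd V x ≤ x := by
  have hne : (V.filter (· ≤ x)).Nonempty := ⟨0, Finset.mem_filter.2 ⟨h0, hx⟩⟩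
  rw [rnd, dif_pos hne]
  exact (Finset.mem_filter.1 ((V.filter (· ≤ x)).max'_mem hne)).2

lemma le_rnd {t x : ℝ} (ht : t ∈ V) (htx : t ≤ x) : t ≤ rnd V x := by
  have hmem : t ∈ V.filter (· ≤ x) := Finset.mem_filter.2 ⟨ht, htx⟩
  have hne : (V.filter (· ≤ x)).Nonempty := ⟨t, hmem⟩
  rw [rnd, dif_pos hne]
  exact Finset.le_max' _ _ hmem

lemma rnd_mono (h0 : (0:ℝ) ∈ V) {x y : ℝ} (hx : 0 ≤ x) (hxy : x ≤ y) :
    rnd V x ≤ rnd V y :=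
  le_rnd (rnd_mem h0 hx) (le_trans (rnd_le h0 hx) hxy)

lemma rnd_zero (h0 : (0:ℝ) ∈ V) : rnd V 0 = 0 :=
  le_antisymm (rnd_le h0 le_rfl) (le_rnd h0 le_rfl)

lemma rnd_one (h0 : (0:ℝ) ∈ V) (h1 : (1:ℝ) ∈ V) : rnd V 1 = 1 :=
  le_antisymm (rnd_le h0 zero_le_one) (le_rnd h1 le_rfl)




/-- iterated finite-difference coefficients -/
def diffC (s : Finset (Fin d)) (H : (Fin d → ℕ) → ℝ) (j : Fin d → ℕ) : ℝ :=
  ∑ e ∈ s.powerset,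
    if (∀ k ∈ e, 1 ≤ j k) then
      (-1:ℝ)^e.card * H (fun k => if k ∈ e then j k - 1 else j k)
    else 0

lemma diffC_empty (H : (Fin d → ℕ) → ℝ) (j : Fin d → ℕ) : diffC ∅ H j = H j := by
  rw [diffC]
  simp

lemma diffC_insert {s : Finset (Fin d)} {k : Fin d} (hk : k ∉ s)
    (H : (Fin d → ℕ) → ℝ) (j : Fin d → ℕ) :
    diffC (insert k s) H j
      = diffC s H j - (if j k = 0 then 0
          else diffC s H (Function.update j k (j k - 1))) := by
  classical
  rw [diffC, Finset.sum_powerset_insert hk]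
  have hB : (∑ e ∈ s.powerset,
      if (∀ k' ∈ insert k e, 1 ≤ j k') then
        (-1:ℝ)^(insert k e).card * H (fun k' => if k' ∈ insert k e then j k' - 1 else j k')
      else 0)
      = - (if j k = 0 then 0 else diffC s H (Function.update j k (j k - 1))) := by
    by_cases hjk : j k = 0
    · rw [if_pos hjk, neg_zero]
      apply Finset.sum_eq_zero
      intro e he
      rw [if_neg]
      intro hcond
      have := hcond k (Finset.mem_insert_self k e)
      omega
    · rw [if_neg hjk, diffC, ← Finset.sum_neg_distrib]
      apply Finset.sum_congr rfl
      intro e he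
      have hke : k ∉ e := fun h => hk (Finset.mem_powerset.1 he h)
      have hcond : (∀ k' ∈ insert k e, 1 ≤ j k') ↔ (∀ k' ∈ e, 1 ≤ Function.update j k (j k - 1) k') := by
        constructor
        · intro h k' hk'
          rw [Function.update_apply, if_neg (fun hek : k' = k => hke (hek ▸ hk'))]
          exact h k' (Finset.mem_insert_of_mem hk')
        · intro h k' hk'
          rcases Finset.mem_insert.1 hk' with rfl | hk''
          · omega
          · have := h k' hk''
            rwa [Function.update_apply, if_neg (fun hek : k' = k => hke (hek ▸ hk''))] at this
      by_cases hc : ∀ k' ∈ e, 1 ≤ Function.update j k (j k - 1) k'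
      · rw [if_pos (hcond.2 hc), if_pos hc, Finset.card_insert_of_notMem hke,
          pow_succ]
        have harg : (fun k' => if k' ∈ insert k e then j k' - 1 else j k')
            = (fun k' => if k' ∈ e then Function.update j k (j k - 1) k' - 1
                else Function.update j k (j k - 1) k') := by
          funext k'
          by_cases hek : k' = k
          · subst hek
            rw [if_pos (Finset.mem_insert_self _ _), if_neg hke, Function.update_self]
          · rw [Function.update_apply, if_neg hek]
            by_cases hke' : k' ∈ e
            · rw [if_pos (Finset.mem_insert_of_mem hke'), if_pos hke']
            · rw [if_neg (fun h => hke' ((Finset.mem_insert.1 h).resolve_left hek)), if_neg hke']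
        rw [harg]
        ring
      · rw [if_neg (fun h => hc (hcond.1 h)), if_neg hc, neg_zero]
  rw [hB, ← sub_eq_add_neg]
  rfl

/-- one-dimensional telescoping -/
lemma tele1 (k : Fin d) (g : (Fin d → ℕ) → ℝ) (j : Fin d → ℕ) (m : ℕ) :
    ∑ i ∈ Finset.range (m+1),
      (g (Function.update j k i) - if (Function.update j k i) k = 0 then 0
        else g (Function.update (Function.update j k i) k ((Function.update j k i) k - 1)))
      = g (Function.update j k m) := by
  induction m with
  | zero => simp
  | succ m ih =>
    rw [Finset.sum_range_succ, ih]
    have h1 : (Function.update j k (m+1)) k = m + 1 := Function.update_self _ _ _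
    rw [h1, if_neg (Nat.succ_ne_zero m)]
    have h2 : Function.update (Function.update j k (m+1)) k (m + 1 - 1)
        = Function.update j k m := by
      rw [Function.update_idem]; norm_num
    rw [h2]; ring

/-- splitting a product-sum over one coordinate -/
lemma sum_piFinset_insert {s : Finset (Fin d)} {k : Fin d} (hk : k ∉ s)
    (t : Fin d → Finset ℕ) (w : Fin d → ℕ) (g : (Fin d → ℕ) → ℝ) :
    ∑ j ∈ Fintype.piFinset (fun i => if i ∈ insert k s then t i else {w i}), g j
      = ∑ m ∈ t k, ∑ j ∈ Fintype.piFinset (fun i => if i ∈ s then t i else {w i}),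
          g (Function.update j k m) := by
  classical
  rw [← Finset.sum_product']
  symm
  apply Finset.sum_bij' (i := fun (p : ℕ × (Fin d → ℕ)) _ => Function.update p.2 k p.1)
    (j := fun j' _ => (j' k, Function.update j' k (w k)))
  · -- membership forward
    intro p hp
    rw [Finset.mem_product] at hp
    rw [Fintype.mem_piFinset]
    intro i
    by_cases hik : i = k
    · subst hik
      rw [Function.update_self, if_pos (Finset.mem_insert_self _ _)]
      exact hp.1
    · rw [Function.update_apply, if_neg hik]
      have := (Fintype.mem_piFinset.1 hp.2) i
      by_cases his : i ∈ s
      · rw [if_pos his] at this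
        rw [if_pos (Finset.mem_insert_of_mem his)]
        exact this
      · rw [if_neg his] at this
        rw [if_neg (fun h => his ((Finset.mem_insert.1 h).resolve_left hik))]
        exact this
  · -- membership backward
    intro j' hj'
    rw [Finset.mem_product]
    constructor
    · show j' k ∈ t k
      have := (Fintype.mem_piFinset.1 hj') k
      rwa [if_pos (Finset.mem_insert_self _ _)] at this
    · show Function.update j' k (w k) ∈ _
      rw [Fintype.mem_piFinset]
      intro i
      by_cases hik : i = k
      · subst hik
        rw [Function.update_self, if_neg hk]
        exact Finset.mem_singleton_self _
      · rw [Function.update_apply, if_neg hik]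
        have := (Fintype.mem_piFinset.1 hj') i
        by_cases his : i ∈ s
        · rw [if_pos (Finset.mem_insert_of_mem his)] at this
          rwa [if_pos his]
        · rw [if_neg (fun h => his ((Finset.mem_insert.1 h).resolve_left hik))] at this
          rwa [if_neg his]
  · -- left inverse
    intro p hp
    rw [Finset.mem_product] at hp
    have hpk : p.2 k = w k := by
      have := (Fintype.mem_piFinset.1 hp.2) k
      rw [if_neg hk, Finset.mem_singleton] at this
      exact this
    apply Prod.ext
    · show Function.update p.2 k p.1 k = p.1
      rw [Function.update_self]
    · show Function.update (Function.update p.2 k p.1) k (w k) = p.2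
      rw [Function.update_idem, ← hpk, Function.update_eq_self]
  · -- right inverse
    intro j' hj'
    show Function.update (Function.update j' k (w k)) k (j' k) = j'
    rw [Function.update_idem, Function.update_eq_self]
  · intro p hp
    rfl

/-- the main telescoping identity -/
lemma tele (H : (Fin d → ℕ) → ℝ) (w : Fin d → ℕ) (s : Finset (Fin d)) :
    ∑ j ∈ Fintype.piFinset (fun k => if k ∈ s then Finset.range (w k + 1) else {w k}),
      diffC s H j = H w := by
  classical
  induction s using Finset.induction_on with
  | empty =>
    have hset : Fintype.piFinset (fun k : Fin d => if k ∈ (∅ : Finset (Fin d))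
        then Finset.range (w k + 1) else {w k}) = {w} := by
      ext j
      simp [Fintype.mem_piFinset, funext_iff]
    rw [hset, Finset.sum_singleton, diffC_empty]
  | insert k s hk ih =>
    rw [sum_piFinset_insert hk, Finset.sum_comm]
    have hstep : ∀ j ∈ Fintype.piFinset (fun i => if i ∈ s then Finset.range (w i + 1) else {w i}),
        ∑ m ∈ Finset.range (w k + 1), diffC (insert k s) H (Function.update j k m)
          = diffC s H j := by
      intro j hj
      have : ∀ m, diffC (insert k s) H (Function.update j k m)
          = diffC s H (Function.update j k m)
            - (if (Function.update j k m) k = 0 then 0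
                else diffC s H (Function.update (Function.update j k m) k
                  ((Function.update j k m) k - 1))) := by
        intro m
        exact diffC_insert hk H _
      calc ∑ m ∈ Finset.range (w k + 1), diffC (insert k s) H (Function.update j k m)
          = ∑ m ∈ Finset.range (w k + 1),
            (diffC s H (Function.update j k m) - if (Function.update j k m) k = 0 then 0
              else diffC s H (Function.update (Function.update j k m) k
                ((Function.update j k m) k - 1))) := by
            apply Finset.sum_congr rfl; intro m _; exact this m
        _ = diffC s H (Function.update j k (w k)) := tele1 k (diffC s H) j (w k)
        _ = diffC s H j := by
            have hjk : j k = w k := by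
              have := (Fintype.mem_piFinset.1 hj) k
              rwa [if_neg hk, Finset.mem_singleton] at this
            rw [← hjk, Function.update_eq_self]
    rw [Finset.sum_congr rfl hstep, ih]

lemma tele_univ (H : (Fin d → ℕ) → ℝ) (w : Fin d → ℕ) :
    ∑ j ∈ Fintype.piFinset (fun k => Finset.range (w k + 1)), diffC Finset.univ H j = H w := by
  have := tele H w Finset.univ
  simpa using this


lemma osc_quadrant_a {f : (Fin d → ℝ) → ℝ} (hf : IsCadlag d f)
    {u : Fin d → ℝ} (hu : u ∈ Set.Icc (0:Fin d → ℝ) 1) {ε : ℝ} (hε : 0 < ε)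
    (a : Fin d → Bool) :
    ∃ δ > 0, ∀ y z, y ∈ quadrant d a u → z ∈ quadrant d a u →
      dist y u < δ → dist z u < δ → |f y - f z| ≤ ε := by
  by_contra hcon
  push_neg at hcon
  have h : ∀ n : ℕ, ∃ y z, y ∈ quadrant d a u ∧ z ∈ quadrant d a u ∧
      dist y u < 1/(n+1) ∧ dist z u < 1/(n+1) ∧ ε < |f y - f z| := by
    intro n
    obtain ⟨y, z, hy, hz, hdy, hdz, hfar⟩ := hcon (1/(n+1)) (by positivity)
    exact ⟨y, z, hy, hz, hdy, hdz, hfar⟩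
  choose y z hy hz hdy hdz hfar using h
  set x : ℕ → (Fin d → ℝ) := fun n => if n % 2 = 0 then y (n/2) else z (n/2) with hx
  have hxQ : ∀ n, x n ∈ quadrant d a u := by
    intro n
    rw [hx]
    by_cases h2 : n % 2 = 0
    · simp only [h2, if_true]; exact hy _
    · simp only [h2, if_false]; exact hz _
  have hdist : ∀ n, dist (x n) u < 1/(((n/2 : ℕ) : ℝ)+1) := by
    intro n
    rw [hx]
    by_cases h2 : n % 2 = 0
    · simp only [h2, if_true]; exact hdy _
    · simp only [h2, if_false]; exact hdz _
  have htend : Tendsto x atTop (nhds u) := by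
    rw [Metric.tendsto_atTop]
    intro ε' hε'
    obtain ⟨M, hM⟩ := exists_nat_one_div_lt hε'
    refine ⟨2*M, fun n hn => ?_⟩
    refine lt_of_lt_of_le (hdist n) (le_of_lt (lt_of_le_of_lt ?_ hM))
    have hMn : M ≤ n/2 := by omega
    have hcast : (M : ℝ) ≤ ((n/2 : ℕ) : ℝ) := Nat.cast_le.2 hMn
    rw [one_div, one_div]
    apply inv_anti₀ (by positivity)
    linarith
  obtain ⟨L, hL, -⟩ := hf u hu a x hxQ htend
  obtain ⟨N, hN⟩ := Metric.tendsto_atTop.1 hL (ε/2) (half_pos hε)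
  have h1 := hN (2*N) (by omega)
  have h2 := hN (2*N+1) (by omega)
  have hd1 : (2*N) % 2 = 0 := by omega
  have hd1' : (2*N) / 2 = N := by omega
  have hd2 : (2*N+1) % 2 = 1 := by omega
  have hd2' : (2*N+1) / 2 = N := by omega
  have hx1 : x (2*N) = y N := by rw [hx]; simp only [hd1, if_true, hd1']
  have hx2 : x (2*N+1) = z N := by
    rw [hx]; simp only [hd2, hd2']
    norm_num
  rw [hx1] at h1
  rw [hx2] at h2
  have := hfar N
  have htri : |f (y N) - f (z N)| ≤ |f (y N) - L| + |f (z N) - L| := by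
    rw [show f (y N) - f (z N) = (f (y N) - L) - (f (z N) - L) by ring]
    exact abs_sub _ _
  rw [Real.dist_eq] at h1 h2
  linarith

lemma osc_quadrant {f : (Fin d → ℝ) → ℝ} (hf : IsCadlag d f)
    {u : Fin d → ℝ} (hu : u ∈ Set.Icc (0:Fin d → ℝ) 1) {ε : ℝ} (hε : 0 < ε) :
    ∃ δ > 0, ∀ (a : Fin d → Bool) y z, y ∈ quadrant d a u → z ∈ quadrant d a u →
      dist y u < δ → dist z u < δ → |f y - f z| ≤ ε := by
  choose δa hδpos hδ using osc_quadrant_a hf hu hε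
  refine ⟨Finset.univ.inf' Finset.univ_nonempty δa, ?_, ?_⟩
  · show 0 < _
    rw [Finset.lt_inf'_iff]
    exact fun a _ => hδpos a
  · intro a y z hy hz hdy hdz
    have hle : Finset.univ.inf' Finset.univ_nonempty δa ≤ δa a :=
      Finset.inf'_le _ (Finset.mem_univ a)
    exact hδ a y z hy hz (lt_of_lt_of_le hdy hle) (lt_of_lt_of_le hdz hle)

section Approx
variable {f : (Fin d → ℝ) → ℝ} {S : Fin d → Finset ℝ}

lemma grid_t_mono {s : Finset (Fin d)} (G : SectionGrid d s) (k : Fin d) :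
    ∀ m, m ≤ G.L k → ∀ i, i ≤ m → G.t k i ≤ G.t k m := by
  intro m
  induction m with
  | zero => intro _ i hi; interval_cases i; exact le_rfl
  | succ m ih =>
    intro hm i hi
    rcases Nat.eq_or_lt_of_le hi with rfl | hlt
    · exact le_rfl
    · exact le_trans (ih (by omega) i (by omega))
        (le_of_lt (G.tmono k m (by omega)))

lemma grid_t_mem {s : Finset (Fin d)} (G : SectionGrid d s) (k : Fin d)
    {i : ℕ} (h : i ≤ G.L k) : G.t k i ∈ Set.Icc (0:ℝ) 1 := by
  constructor
  · rw [← G.t0 k]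
    exact grid_t_mono G k i h 0 (Nat.zero_le _)
  · rw [← G.tlast k]
    exact grid_t_mono G k (G.L k) le_rfl i h

variable (f S) in
/-- the grid points -/
def PP (j : Fin d → ℕ) : Fin d → ℝ := fun k => en (S k) (j k)

variable (f S) in
def HH (j : Fin d → ℕ) : ℝ := f (PP S j)

variable (f S) in
/-- coordinatewise rounding into the grid -/
def gam (x : Fin d → ℝ) : Fin d → ℝ := fun k => rnd (S k) (x k)

variable (f S) in
/-- the approximating element of the span -/
def approx : (Fin d → ℝ) → ℝ :=
  ∑ j ∈ Fintype.piFinset (fun k => Finset.range (S k).card),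
    diffC Finset.univ (HH f S) j • upperBoxIndicator d (PP S j)

lemma approx_mem_spanF (hS0 : ∀ k, (0:ℝ) ∈ S k) (hS1 : ∀ k, (1:ℝ) ∈ S k)
    (hSsub : ∀ k, ∀ x ∈ S k, x ∈ Set.Icc (0:ℝ) 1) :
    approx f S ∈ spanF d := by
  apply Submodule.sum_mem
  intro j hj
  apply Submodule.smul_mem
  apply Submodule.subset_span
  refine ⟨PP S j, ?_, rfl⟩
  constructor
  · intro k
    exact (hSsub k _ (en_mem ((Fintype.mem_piFinset.1 hj) k |> Finset.mem_range.1))).1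
  · intro k
    exact (hSsub k _ (en_mem ((Fintype.mem_piFinset.1 hj) k |> Finset.mem_range.1))).2

lemma gam_mem (hS0 : ∀ k, (0:ℝ) ∈ S k)
    (hSsub : ∀ k, ∀ x ∈ S k, x ∈ Set.Icc (0:ℝ) 1)
    {x : Fin d → ℝ} (hx : x ∈ Set.Icc (0:Fin d → ℝ) 1) (k : Fin d) :
    gam S x k ∈ S k := rnd_mem (hS0 k) (hx.1 k)

lemma approx_eq (hS0 : ∀ k, (0:ℝ) ∈ S k) (hS1 : ∀ k, (1:ℝ) ∈ S k)
    (hSsub : ∀ k, ∀ x ∈ S k, x ∈ Set.Icc (0:ℝ) 1)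
    {x : Fin d → ℝ} (hx : x ∈ Set.Icc (0:Fin d → ℝ) 1) :
    approx f S x = f (gam S x) := by
  classical
  have hxk0 : ∀ k, (0:ℝ) ≤ x k := fun k => hx.1 k
  have hxk1 : ∀ k, x k ≤ 1 := fun k => hx.2 k
  set w : Fin d → ℕ := fun k => idx (S k) (rnd (S k) (x k)) with hwdef
  have happly : approx f S x
      = ∑ j ∈ Fintype.piFinset (fun k => Finset.range (S k).card),
          diffC Finset.univ (HH f S) j * upperBoxIndicator d (PP S j) x := by
    rw [approx, Finset.sum_apply]
    apply Finset.sum_congr rfl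
    intro j _
    rfl
  rw [happly]
  have hind : ∀ j ∈ Fintype.piFinset (fun k => Finset.range (S k).card),
      diffC Finset.univ (HH f S) j * upperBoxIndicator d (PP S j) x
        = if (∀ k, PP S j k ≤ x k) then diffC Finset.univ (HH f S) j else 0 := by
    intro j _
    rw [upperBoxIndicator, Set.indicator_apply]
    by_cases h : ∀ k, PP S j k ≤ x k
    · rw [if_pos h, if_pos, mul_one]
      exact ⟨fun k => h k, fun k => hxk1 k⟩
    · rw [if_neg h, if_neg, mul_zero]
      intro hmem
      exact h (fun k => hmem.1 k)
  rw [Finset.sum_congr rfl hind, ← Finset.sum_filter]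
  have hset : (Fintype.piFinset (fun k => Finset.range (S k).card)).filter
      (fun j => ∀ k, PP S j k ≤ x k)
      = Fintype.piFinset (fun k => Finset.range (w k + 1)) := by
    ext j
    rw [Finset.mem_filter, Fintype.mem_piFinset, Fintype.mem_piFinset]
    constructor
    · intro ⟨h1, h2⟩ k
      rw [Finset.mem_range, Nat.lt_succ_iff]
      have hjk : j k < (S k).card := Finset.mem_range.1 (h1 k)
      have hmem : en (S k) (j k) ∈ S k := en_mem hjk
      have hle : en (S k) (j k) ≤ rnd (S k) (x k) := le_rnd hmem (h2 k)
      have := idx_le_idx hmem (rnd_mem (hS0 k) (hxk0 k)) hle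
      rwa [idx_en hjk] at this
    · intro h
      have hwlt : ∀ k, w k < (S k).card :=
        fun k => idx_lt_card (rnd_mem (hS0 k) (hxk0 k))
      have hjw : ∀ k, j k ≤ w k := fun k => Nat.lt_succ_iff.1 (Finset.mem_range.1 (h k))
      constructor
      · intro k
        exact Finset.mem_range.2 (lt_of_le_of_lt (hjw k) (hwlt k))
      · intro k
        calc PP S j k = en (S k) (j k) := rfl
          _ ≤ en (S k) (w k) := en_le_en (hjw k) (hwlt k)
          _ = rnd (S k) (x k) := en_idx (rnd_mem (hS0 k) (hxk0 k))
          _ ≤ x k := rnd_le (hS0 k) (hxk0 k)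
  rw [hset, tele_univ]
  rw [HH]
  congr 1
  funext k
  exact en_idx (rnd_mem (hS0 k) (hxk0 k))

lemma svn_transfer (hS0 : ∀ k, (0:ℝ) ∈ S k) (hS1 : ∀ k, (1:ℝ) ∈ S k)
    (hSsub : ∀ k, ∀ x ∈ S k, x ∈ Set.Icc (0:ℝ) 1)
    (happrox : ∀ x ∈ Set.Icc (0:Fin d → ℝ) 1, approx f S x = f (gam S x))
    (s : Finset (Fin d)) (G : SectionGrid d s) :
    ENNReal.ofReal (gridVariationSum (approx f S) G) ≤ sectionVitali d f s := by
  classical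
  -- the rounded grid values
  set q : Fin d → ℕ → ℝ := fun k i => rnd (S k) (G.t k i) with hqdef
  have hq0 : ∀ k, q k 0 = 0 := by
    intro k; simp only [hqdef]; rw [G.t0 k]; exact rnd_zero (hS0 k)
  have hqlast : ∀ k, q k (G.L k) = 1 := by
    intro k; simp only [hqdef]; rw [G.tlast k]; exact rnd_one (hS0 k) (hS1 k)
  have hqmono : ∀ k, ∀ i i', i ≤ i' → i' ≤ G.L k → q k i ≤ q k i' := by
    intro k i i' h h'
    exact rnd_mono (hS0 k) (grid_t_mem G k (le_trans h h')).1
      (grid_t_mono G k i' h' i h)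
  have hqmem : ∀ k, ∀ i ≤ G.L k, q k i ∈ S k := by
    intro k i hi
    exact rnd_mem (hS0 k) (grid_t_mem G k hi).1
  -- the value sets of the rounded grid
  set V : Fin d → Finset ℝ := fun k =>
    if k ∈ s then (Finset.range (G.L k + 1)).image (q k) else {0, 1} with hVdef
  have hV0 : ∀ k, (0:ℝ) ∈ V k := by
    intro k
    simp only [hVdef]
    by_cases hks : k ∈ s
    · rw [if_pos hks]
      exact Finset.mem_image.2 ⟨0, Finset.mem_range.2 (by omega), hq0 k⟩
    · rw [if_neg hks]; simp
  have hV1 : ∀ k, (1:ℝ) ∈ V k := by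
    intro k
    simp only [hVdef]
    by_cases hks : k ∈ s
    · rw [if_pos hks]
      exact Finset.mem_image.2 ⟨G.L k, Finset.mem_range.2 (by omega), hqlast k⟩
    · rw [if_neg hks]; simp
  have hVsub : ∀ k, ∀ x ∈ V k, x ∈ Set.Icc (0:ℝ) 1 := by
    intro k x hx
    simp only [hVdef] at hx
    by_cases hks : k ∈ s
    · rw [if_pos hks] at hx
      obtain ⟨i, hi, rfl⟩ := Finset.mem_image.1 hx
      exact hSsub k _ (hqmem k i (Nat.lt_succ_iff.1 (Finset.mem_range.1 hi)))
    · rw [if_neg hks] at hx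
      rcases Finset.mem_insert.1 hx with rfl | hx1
      · exact ⟨le_rfl, zero_le_one⟩
      · rw [Finset.mem_singleton.1 hx1]
        exact ⟨zero_le_one, le_rfl⟩
  have hVmem : ∀ k ∈ s, ∀ i ≤ G.L k, q k i ∈ V k := by
    intro k hks i hi
    simp only [hVdef]
    rw [if_pos hks]
    exact Finset.mem_image.2 ⟨i, Finset.mem_range.2 (by omega), rfl⟩
  -- the reduced grid
  set G' : SectionGrid d s :=
    { L := fun k => (V k).card - 1
      t := fun k => en (V k)
      Lpos := fun k => by
        show 0 < (V k).card - 1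
        have := two_le_card (hV0 k) (hV1 k)
        omega
      Lout := fun k hk => by
        show (V k).card - 1 = 1
        have hcd : (V k).card = 2 := by
          simp only [hVdef, if_neg hk]
          rw [Finset.card_insert_of_notMem (by norm_num), Finset.card_singleton]
        omega
      t0 := fun k => en_zero (hV0 k) (hVsub k)
      tlast := fun k => en_last (hV1 k) (hVsub k)
      tmono := fun k i hi => by
        have hi' : i < (V k).card - 1 := hi
        have h2 := two_le_card (hV0 k) (hV1 k)
        show en (V k) i < en (V k) (i+1)
        exact en_lt_en (Nat.lt_succ_self i) (by omega) } with hG'def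
  refine le_trans ?_ (le_iSup (fun G0 : SectionGrid d s =>
    ENNReal.ofReal (gridVariationSum f G0)) G')
  apply ENNReal.ofReal_le_ofReal
  -- index map
  set φ : (Fin d → ℕ) → (Fin d → ℕ) :=
    fun j k => if k ∈ s then idx (V k) (q k (j k)) else 1 with hφdef
  set B := Fintype.piFinset (fun k => Finset.Icc 1 (G.L k)) with hBdef
  have hBmem : ∀ j ∈ B, ∀ k, 1 ≤ j k ∧ j k ≤ G.L k := by
    intro j hj k
    have := (Fintype.mem_piFinset.1 hj) k
    rw [Finset.mem_Icc] at this
    exact this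
  -- vertices are in the cube, and γ of a vertex
  have hvert_cube : ∀ j ∈ B, ∀ e, gridVertex G j e ∈ Set.Icc (0:Fin d → ℝ) 1 := by
    intro j hj e
    have hmem : ∀ k, gridVertex G j e k ∈ Set.Icc (0:ℝ) 1 := by
      intro k
      simp only [gridVertex]
      by_cases hks : k ∈ s
      · rw [if_pos hks]
        by_cases hke : k ∈ e
        · rw [if_pos hke]; exact grid_t_mem G k (hBmem j hj k).2
        · rw [if_neg hke]; exact grid_t_mem G k (le_trans (by omega) (hBmem j hj k).2)
      · rw [if_neg hks]; exact ⟨le_rfl, zero_le_one⟩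
    exact ⟨fun k => (hmem k).1, fun k => (hmem k).2⟩
  have hgamvert : ∀ j e, gam S (gridVertex G j e)
      = fun k => if k ∈ s then (if k ∈ e then q k (j k) else q k (j k - 1)) else 0 := by
    intro j e
    funext k
    show rnd (S k) (gridVertex G j e k) = _
    simp only [gridVertex, hqdef]
    by_cases hks : k ∈ s
    · rw [if_pos hks, if_pos hks]
      by_cases hke : k ∈ e
      · rw [if_pos hke, if_pos hke]
      · rw [if_neg hke, if_neg hke]
    · rw [if_neg hks, if_neg hks]
      exact rnd_zero (hS0 k)
  -- degenerate boxes vanish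
  have hdeg : ∀ j ∈ B, (¬ ∀ k ∈ s, q k (j k - 1) ≠ q k (j k)) →
      boxQuasiVolume (approx f S) G j = 0 := by
    intro j hj hnd
    push_neg at hnd
    obtain ⟨k, hks, hqeq⟩ := hnd
    have hins : s = insert k (s.erase k) := (Finset.insert_erase hks).symm
    have hps : s.powerset = (insert k (s.erase k)).powerset := by
      rw [Finset.insert_erase hks]
    rw [boxQuasiVolume, hps, Finset.sum_powerset_insert (Finset.notMem_erase k s),
      ← Finset.sum_add_distrib]
    apply Finset.sum_eq_zero
    intro e he
    have hke : k ∉ e := fun h => Finset.notMem_erase k s (Finset.mem_powerset.1 he h)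
    have hcard : e.card < s.card := by
      have h1 : e.card ≤ (s.erase k).card := Finset.card_le_card (Finset.mem_powerset.1 he)
      have h2 : (s.erase k).card < s.card := Finset.card_erase_lt_of_mem hks
      omega
    have hsign : (-1:ℝ) ^ (s.card - (insert k e).card) * (-1) = (-1:ℝ) ^ (s.card - e.card) := by
      rw [Finset.card_insert_of_notMem hke, ← pow_succ]
      congr 1
      omega
    have hfeq : approx f S (gridVertex G j e) = approx f S (gridVertex G j (insert k e)) := by
      rw [happrox _ (hvert_cube j hj e), happrox _ (hvert_cube j hj (insert k e)),
        hgamvert, hgamvert]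
      congr 1
      funext k'
      by_cases hk's : k' ∈ s
      · rw [if_pos hk's, if_pos hk's]
        by_cases hk'k : k' = k
        · subst hk'k
          rw [if_neg hke, if_pos (Finset.mem_insert_self _ _), hqeq]
        · by_cases hk'e : k' ∈ e
          · rw [if_pos hk'e, if_pos (Finset.mem_insert_of_mem hk'e)]
          · rw [if_neg hk'e, if_neg (fun h => hk'e ((Finset.mem_insert.1 h).resolve_left hk'k))]
      · rw [if_neg hk's, if_neg hk's]
    rw [hfeq, ← hsign]
    ring
  -- nondegenerate boxes: index consecutive property
  have hconsec : ∀ j ∈ B, (∀ k ∈ s, q k (j k - 1) ≠ q k (j k)) →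
      ∀ k ∈ s, idx (V k) (q k (j k)) = idx (V k) (q k (j k - 1)) + 1 := by
    intro j hj hnd k hks
    have hjk := hBmem j hj k
    have hlt : q k (j k - 1) < q k (j k) :=
      lt_of_le_of_ne (hqmono k _ _ (by omega) hjk.2) (hnd k hks)
    apply idx_consec (hVmem k hks _ (by omega)) (hVmem k hks _ hjk.2) hlt
    intro v hv
    simp only [hVdef] at hv
    rw [if_pos hks] at hv
    obtain ⟨i, hi, rfl⟩ := Finset.mem_image.1 hv
    rw [Finset.mem_range, Nat.lt_succ_iff] at hi
    by_cases hij : i ≤ j k - 1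
    · exact Or.inl (hqmono k _ _ hij (by omega))
    · exact Or.inr (hqmono k _ _ (by omega) hi)
  -- nondegenerate boxes map into the index set of G'
  have hφmem : ∀ j ∈ B, (∀ k ∈ s, q k (j k - 1) ≠ q k (j k)) →
      φ j ∈ Fintype.piFinset (fun k => Finset.Icc 1 (G'.L k)) := by
    intro j hj hnd
    rw [Fintype.mem_piFinset]
    intro k
    rw [Finset.mem_Icc]
    simp only [hφdef]
    by_cases hks : k ∈ s
    · simp only [if_pos hks]
      have h1 := hconsec j hj hnd k hks
      have h2 : idx (V k) (q k (j k)) < (V k).card :=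
        idx_lt_card (hVmem k hks _ (hBmem j hj k).2)
      constructor
      · omega
      · show _ ≤ (V k).card - 1
        omega
    · simp only [if_neg hks]
      refine ⟨le_rfl, ?_⟩
      show 1 ≤ (V k).card - 1
      have := two_le_card (hV0 k) (hV1 k)
      omega
  -- nondegenerate boxes have matching quasi-volumes
  have hmatch : ∀ j ∈ B, (∀ k ∈ s, q k (j k - 1) ≠ q k (j k)) →
      boxQuasiVolume (approx f S) G j = boxQuasiVolume f G' (φ j) := by
    intro j hj hnd
    rw [boxQuasiVolume, boxQuasiVolume]
    apply Finset.sum_congr rfl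
    intro e he
    congr 1
    rw [happrox _ (hvert_cube j hj e), hgamvert]
    congr 1
    funext k
    simp only [gridVertex]
    by_cases hks : k ∈ s
    · rw [if_pos hks, if_pos hks]
      have hjk := hBmem j hj k
      show _ = (if k ∈ e then en (V k) (φ j k) else en (V k) (φ j k - 1))
      simp only [hφdef, if_pos hks]
      by_cases hke : k ∈ e
      · rw [if_pos hke, if_pos hke, en_idx (hVmem k hks _ hjk.2)]
      · rw [if_neg hke, if_neg hke, hconsec j hj hnd k hks]
        rw [Nat.add_sub_cancel, en_idx (hVmem k hks _ (by omega))]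
    · rw [if_neg hks, if_neg hks]
  -- injectivity of φ on the nondegenerate boxes
  set ndeg : (Fin d → ℕ) → Prop := fun j => ∀ k ∈ s, q k (j k - 1) ≠ q k (j k) with hndegdef
  have hinj : Set.InjOn φ (B.filter ndeg) := by
    intro j hjmem j' hj'mem hφeq
    rw [Finset.coe_filter, Set.mem_setOf_eq] at hjmem hj'mem
    obtain ⟨hj, hjnd⟩ := hjmem
    obtain ⟨hj', hj'nd⟩ := hj'mem
    funext k
    by_cases hks : k ∈ s
    · have hφk : idx (V k) (q k (j k)) = idx (V k) (q k (j' k)) := by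
        have := congrFun hφeq k
        simp only [hφdef] at this
        simpa only [if_pos hks] using this
      by_contra hne
      have hσmono : ∀ i i', i ≤ i' → i' ≤ G.L k → idx (V k) (q k i) ≤ idx (V k) (q k i') := by
        intro i i' h h'
        exact idx_le_idx (hVmem k hks _ (le_trans h h')) (hVmem k hks _ h')
          (hqmono k i i' h h')
      rcases Nat.lt_or_ge (j k) (j' k) with hlt | hge
      · have h1 : idx (V k) (q k (j k)) ≤ idx (V k) (q k (j' k - 1)) :=
          hσmono _ _ (by omega) (le_trans (by omega) (hBmem j' hj' k).2)
        have h2 := hconsec j' hj' hj'nd k hks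
        omega
      · have hlt' : j' k < j k := by omega
        have h1 : idx (V k) (q k (j' k)) ≤ idx (V k) (q k (j k - 1)) :=
          hσmono _ _ (by omega) (le_trans (by omega) (hBmem j hj k).2)
        have h2 := hconsec j hj hjnd k hks
        omega
    · have h1 := (hBmem j hj k).2
      have h2 := (hBmem j' hj' k).2
      have h3 := G.Lout k hks
      have := (hBmem j hj k).1
      have := (hBmem j' hj' k).1
      omega
  -- put it together
  calc gridVariationSum (approx f S) G
      = ∑ j ∈ B.filter ndeg, |boxQuasiVolume (approx f S) G j| := by
        rw [gridVariationSum, ← hBdef]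
        rw [← Finset.sum_filter_add_sum_filter_not B ndeg]
        have hz : ∑ j ∈ B.filter (fun j => ¬ ndeg j), |boxQuasiVolume (approx f S) G j| = 0 := by
          apply Finset.sum_eq_zero
          intro j hjm
          rw [Finset.mem_filter] at hjm
          rw [hdeg j hjm.1 hjm.2, abs_zero]
        rw [hz, add_zero]
    _ = ∑ j ∈ B.filter ndeg, |boxQuasiVolume f G' (φ j)| := by
        apply Finset.sum_congr rfl
        intro j hjm
        rw [Finset.mem_filter] at hjm
        rw [hmatch j hjm.1 hjm.2]
    _ = ∑ j' ∈ (B.filter ndeg).image φ, |boxQuasiVolume f G' j'| := by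
        rw [Finset.sum_image (fun j hj j' hj' h => hinj (Finset.mem_coe.2 hj) (Finset.mem_coe.2 hj') h)]
    _ ≤ ∑ j' ∈ Fintype.piFinset (fun k => Finset.Icc 1 (G'.L k)), |boxQuasiVolume f G' j'| := by
        apply Finset.sum_le_sum_of_subset_of_nonneg
        · intro j' hj'
          obtain ⟨j, hjm, rfl⟩ := Finset.mem_image.1 hj'
          rw [Finset.mem_filter] at hjm
          exact hφmem j hjm.1 hjm.2
        · intro j' _ _
          exact abs_nonneg _
    _ = gridVariationSum f G' := rfl

end Approx

lemma exists_adapted {f : (Fin d → ℝ) → ℝ} (hf : IsCadlag d f) {ε : ℝ} (hε : 0 < ε) :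
    ∃ S : Fin d → Finset ℝ, (∀ k, (0:ℝ) ∈ S k) ∧ (∀ k, (1:ℝ) ∈ S k) ∧
      (∀ k, ∀ x ∈ S k, x ∈ Set.Icc (0:ℝ) 1) ∧
      ∀ x ∈ Set.Icc (0:Fin d → ℝ) 1, |f x - f (fun k => rnd (S k) (x k))| ≤ ε := by
  classical
  have hosc : ∀ u : ↥(Set.Icc (0:Fin d → ℝ) 1), ∃ δ > 0,
      ∀ (a : Fin d → Bool) y z, y ∈ quadrant d a u.1 → z ∈ quadrant d a u.1 →
        dist y u.1 < δ → dist z u.1 < δ → |f y - f z| ≤ ε :=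
    fun u => osc_quadrant hf u.2 hε
  choose δ hδpos hδ using hosc
  obtain ⟨C, hC⟩ := isCompact_Icc.elim_finite_subcover
    (fun u : ↥(Set.Icc (0:Fin d → ℝ) 1) => Metric.ball u.1 (δ u / 2))
    (fun u => Metric.isOpen_ball)
    (by
      intro v hv
      exact Set.mem_iUnion.2 ⟨⟨v, hv⟩, Metric.mem_ball_self (half_pos (hδpos ⟨v, hv⟩))⟩)
  have h0cube : (0 : Fin d → ℝ) ∈ Set.Icc (0:Fin d → ℝ) 1 := by
    constructor <;> intro k <;> simp
  have hCne : C.Nonempty := by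
    obtain ⟨i, hi, -⟩ := Set.mem_iUnion₂.1 (hC h0cube)
    exact ⟨i, hi⟩
  set ρ0 : ℝ := C.inf' hCne δ with hρ0def
  have hρ0 : 0 < ρ0 := by
    rw [hρ0def, Finset.lt_inf'_iff]
    exact fun i _ => hδpos i
  obtain ⟨N0, hN0⟩ := exists_nat_one_div_lt (show (0:ℝ) < ρ0/2 by linarith)
  set N : ℕ := N0 + 1 with hNdef
  have hN : 1/(N:ℝ) < ρ0/2 := by
    rw [hNdef]; push_cast; exact hN0
  have hNpos : (0:ℝ) < N := by rw [hNdef]; push_cast; linarith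
  set S : Fin d → Finset ℝ := fun k =>
    insert 0 (insert 1 (((Finset.range (N+1)).image (fun i : ℕ => (i:ℝ)/N))
      ∪ C.image (fun u => u.1 k))) with hSdef
  have hS0 : ∀ k, (0:ℝ) ∈ S k := fun k => Finset.mem_insert_self _ _
  have hS1 : ∀ k, (1:ℝ) ∈ S k := fun k =>
    Finset.mem_insert_of_mem (Finset.mem_insert_self _ _)
  have hSsub : ∀ k, ∀ x ∈ S k, x ∈ Set.Icc (0:ℝ) 1 := by
    intro k x hx
    rw [hSdef] at hx
    simp only [Finset.mem_insert, Finset.mem_union, Finset.mem_image,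
      Finset.mem_range] at hx
    rcases hx with rfl | rfl | ⟨i, hi, rfl⟩ | ⟨u, hu, rfl⟩
    · exact ⟨le_rfl, zero_le_one⟩
    · exact ⟨zero_le_one, le_rfl⟩
    · constructor
      · positivity
      · rw [div_le_one hNpos]
        exact_mod_cast Nat.lt_succ_iff.1 hi
    · exact ⟨u.2.1 k, u.2.2 k⟩
  have hcenter : ∀ (u : ↥(Set.Icc (0:Fin d → ℝ) 1)), u ∈ C → ∀ k, u.1 k ∈ S k := by
    intro u hu k
    rw [hSdef]
    exact Finset.mem_insert_of_mem (Finset.mem_insert_of_mem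
      (Finset.mem_union_right _ (Finset.mem_image_of_mem _ hu)))
  refine ⟨S, hS0, hS1, hSsub, ?_⟩
  intro x hx
  have hxk0 : ∀ k, (0:ℝ) ≤ x k := fun k => hx.1 k
  have hxk1 : ∀ k, x k ≤ 1 := fun k => hx.2 k
  set γ : Fin d → ℝ := fun k => rnd (S k) (x k) with hγdef
  have hγle : ∀ k, γ k ≤ x k := fun k => rnd_le (hS0 k) (hxk0 k)
  have hγmem : ∀ k, γ k ∈ S k := fun k => rnd_mem (hS0 k) (hxk0 k)
  have hγclose : ∀ k, x k - γ k < 1/(N:ℝ) := by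
    intro k
    have hfl : ((⌊x k * N⌋₊ : ℝ)/N) ∈ S k := by
      rw [hSdef]
      apply Finset.mem_insert_of_mem (Finset.mem_insert_of_mem _)
      apply Finset.mem_union_left
      apply Finset.mem_image_of_mem
      rw [Finset.mem_range, Nat.lt_succ_iff]
      calc ⌊x k * N⌋₊ ≤ ⌊(N:ℝ)⌋₊ := Nat.floor_le_floor (by nlinarith [mul_le_mul_of_nonneg_right (hxk1 k) hNpos.le])
        _ = N := Nat.floor_natCast N
    have hfl2 : ((⌊x k * N⌋₊ : ℝ)/N) ≤ x k := by
      rw [div_le_iff₀ hNpos]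
      exact Nat.floor_le (mul_nonneg (hxk0 k) hNpos.le)
    have := le_rnd hfl hfl2
    have h2 : x k * N < ⌊x k * N⌋₊ + 1 := Nat.lt_floor_add_one _
    rw [hγdef]
    have : (⌊x k * N⌋₊ : ℝ)/N ≤ rnd (S k) (x k) := le_rnd hfl hfl2
    rw [div_le_iff₀ hNpos] at this
    rw [lt_div_iff₀ hNpos]
    nlinarith
  obtain ⟨i, hiC, hix⟩ := Set.mem_iUnion₂.1 (hC hx)
  have hidist : dist x i.1 < δ i / 2 := Metric.mem_ball.1 hix
  have hρ0δ : ρ0 ≤ δ i := Finset.inf'_le _ hiC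
  have hγdist : dist γ i.1 < δ i := by
    have h1 : dist γ x < ρ0/2 := by
      rw [dist_pi_lt_iff (by linarith)]
      intro k
      rw [Real.dist_eq, abs_sub_comm, abs_of_nonneg (by linarith [hγle k])]
      calc x k - γ k < 1/(N:ℝ) := hγclose k
        _ < ρ0/2 := hN
    calc dist γ i.1 ≤ dist γ x + dist x i.1 := dist_triangle _ _ _
      _ < ρ0/2 + δ i/2 := by linarith
      _ ≤ δ i := by linarith
  set a : Fin d → Bool := fun k => decide (i.1 k ≤ γ k) with hadef
  have hxQ : x ∈ quadrant d a i.1 := by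
    intro k
    rw [hadef]
    by_cases hik : i.1 k ≤ γ k
    · simp only [decide_eq_true_eq]
      rw [if_pos hik]
      exact ⟨le_trans hik (hγle k), hxk1 k⟩
    · simp only [decide_eq_true_eq]
      rw [if_neg hik]
      refine ⟨hxk0 k, ?_⟩
      by_contra hcon
      push_neg at hcon
      exact hik (le_rnd (hcenter i hiC k) hcon)
  have hγQ : γ ∈ quadrant d a i.1 := by
    intro k
    rw [hadef]
    by_cases hik : i.1 k ≤ γ k
    · simp only [decide_eq_true_eq]
      rw [if_pos hik]
      exact ⟨hik, (hSsub k _ (hγmem k)).2⟩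
    · simp only [decide_eq_true_eq]
      rw [if_neg hik]
      exact ⟨(hSsub k _ (hγmem k)).1, not_le.1 hik⟩
  exact hδ i a x γ hxQ hγQ (lt_of_lt_of_le hidist (by linarith)) hγdist


section Final
variable {f : (Fin d → ℝ) → ℝ} {S : Fin d → Finset ℝ}

lemma gam_zero (hS0 : ∀ k, (0:ℝ) ∈ S k) : gam S (0 : Fin d → ℝ) = 0 := by
  funext k
  show rnd (S k) ((0 : Fin d → ℝ) k) = 0
  rw [Pi.zero_apply]
  exact rnd_zero (hS0 k)

lemma svn_approx_le (hS0 : ∀ k, (0:ℝ) ∈ S k) (hS1 : ∀ k, (1:ℝ) ∈ S k)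
    (hSsub : ∀ k, ∀ x ∈ S k, x ∈ Set.Icc (0:ℝ) 1) :
    svn d (approx f S) ≤ svn d f := by
  have happrox : ∀ x ∈ Set.Icc (0:Fin d → ℝ) 1, approx f S x = f (gam S x) :=
    fun x hx => approx_eq hS0 hS1 hSsub hx
  rw [svn, svn]
  apply add_le_add
  · apply le_of_eq
    congr 1
    have h0 : (0 : Fin d → ℝ) ∈ Set.Icc (0:Fin d → ℝ) 1 :=
      ⟨le_rfl, fun k => zero_le_one⟩
    rw [happrox 0 h0, gam_zero hS0]
  · apply Finset.sum_le_sum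
    intro s _
    rw [sectionVitali]
    apply iSup_le
    intro G
    exact svn_transfer hS0 hS1 hSsub happrox s G

lemma exists_good_approx (hf : IsCadlag d f) {ε : ℝ} (hε : 0 < ε) :
    ∃ g : (Fin d → ℝ) → ℝ, g ∈ spanF d ∧ svn d g ≤ svn d f ∧
      ∀ x ∈ Set.Icc (0:Fin d → ℝ) 1, |f x - g x| ≤ ε := by
  obtain ⟨S, hS0, hS1, hSsub, hclose⟩ := exists_adapted hf hε
  refine ⟨approx f S, approx_mem_spanF hS0 hS1 hSsub, svn_approx_le hS0 hS1 hSsub, ?_⟩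
  intro x hx
  rw [approx_eq hS0 hS1 hSsub hx]
  exact hclose x hx

end Final

end Aux

end HAL

/-- `D^d_M` is the closure of `R^d_M` in the supremum norm:
`R^d_M ⊆ D^d_M`, and every `f ∈ D^d_M` is a uniform limit (on the unit cube)
of a sequence in `R^d_M`. -/
theorem Dset_eq_closure_Rset
    (d : ℕ) (hd : 1 ≤ d) (M : ℝ) (hM : 0 < M) :
    HAL.Rset d M ⊆ HAL.Dset d M ∧
      ∀ f ∈ HAL.Dset d M, ∃ F : ℕ → (Fin d → ℝ) → ℝ,
        (∀ n, F n ∈ HAL.Rset d M) ∧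
        ∀ ε > (0 : ℝ), ∃ N : ℕ, ∀ n ≥ N,
          ∀ x ∈ Set.Icc (0 : Fin d → ℝ) 1, |f x - F n x| ≤ ε := by
  constructor
  · intro g hg
    exact ⟨HAL.isCadlag_spanF hg.1, hg.2⟩
  · intro f hf
    obtain ⟨hcad, hsvn⟩ := hf
    have key : ∀ n : ℕ, ∃ g : (Fin d → ℝ) → ℝ, g ∈ HAL.spanF d ∧
        HAL.svn d g ≤ ENNReal.ofReal M ∧
        ∀ x ∈ Set.Icc (0:Fin d → ℝ) 1, |f x - g x| ≤ 1/((n:ℝ)+1) := by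
      intro n
      obtain ⟨g, hg1, hg2, hg3⟩ := HAL.exists_good_approx hcad
        (show (0:ℝ) < 1/((n:ℝ)+1) by positivity)
      exact ⟨g, hg1, le_trans hg2 hsvn, hg3⟩
    choose g hg1 hg2 hg3 using key
    refine ⟨g, fun n => ⟨hg1 n, hg2 n⟩, ?_⟩
    intro ε hε
    obtain ⟨N, hN⟩ := exists_nat_one_div_lt hε
    refine ⟨N, fun n hn x hx => ?_⟩
    calc |f x - g n x| ≤ 1/((n:ℝ)+1) := hg3 n x hx
      _ ≤ 1/((N:ℝ)+1) := by
          apply one_div_le_one_div_of_le (by positivity)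
          have : (N:ℝ) ≤ n := Nat.cast_le.2 hn
          linarith
      _ ≤ ε := le_of_lt hN
end
end

section
/- Fix an integer d ≥ 1 and M ∈ (0,∞). For every finite signed Borel measure μ on [0,1]^d with total variation norm ‖μ‖_TV ≤ M there exists a unique function f_μ ∈ D^d_M such that f_μ(x) = μ([0,x]) for all x ∈ [0,1]^d. -/
open MeasureTheory Filter Set
open scoped ENNReal NNReal

noncomputable section

namespace HALProof


variable {α : Type*} [MeasurableSpace α]

lemma sm_apply_eq (v : SignedMeasure α) {A : Set α} (hA : MeasurableSet A) :
    v A = (v.toJordanDecomposition.posPart A).toReal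
        - (v.toJordanDecomposition.negPart A).toReal := by
  conv_lhs => rw [← v.toSignedMeasure_toJordanDecomposition]
  rw [JordanDecomposition.toSignedMeasure]
  exact Measure.toSignedMeasure_sub_apply hA

lemma abs_le_tv (v : SignedMeasure α) {A : Set α} (hA : MeasurableSet A) :
    |v A| ≤ (v.totalVariation A).toReal := by
  rw [sm_apply_eq v hA, SignedMeasure.totalVariation]
  rw [Measure.coe_add, Pi.add_apply,
    ENNReal.toReal_add (measure_ne_top _ _) (measure_ne_top _ _)]
  have h1 := ENNReal.toReal_nonneg (a := v.toJordanDecomposition.posPart A)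
  have h2 := ENNReal.toReal_nonneg (a := v.toJordanDecomposition.negPart A)
  rw [abs_le]; constructor <;> linarith

lemma v_inter_diff (v : SignedMeasure α) {W A B : Set α} (hW : MeasurableSet W)
    (hA : MeasurableSet A) (hB : MeasurableSet B) (hAB : A ⊆ B) :
    v (W ∩ (B \ A)) = v (W ∩ B) - v (W ∩ A) := by
  have hU : W ∩ B = (W ∩ A) ∪ (W ∩ (B \ A)) := by
    ext y
    simp only [Set.mem_inter_iff, Set.mem_union, Set.mem_diff]
    constructor
    · rintro ⟨hw, hb⟩
      by_cases ha : y ∈ A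
      · exact Or.inl ⟨hw, ha⟩
      · exact Or.inr ⟨hw, hb, ha⟩
    · rintro (⟨hw, ha⟩ | ⟨hw, hb, _⟩)
      · exact ⟨hw, hAB ha⟩
      · exact ⟨hw, hb⟩
  have hd : Disjoint (W ∩ A) (W ∩ (B \ A)) := by
    rw [Set.disjoint_left]
    rintro y ⟨_, hyA⟩ ⟨_, _, hyA'⟩
    exact hyA' hyA
  have := v.of_union hd (hW.inter hA) (hW.inter (hB.diff hA))
  rw [← hU] at this
  rw [this]; ring

lemma sm_incl_excl {ι : Type*} [DecidableEq ι] (v : SignedMeasure α)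
    (A B : ι → Set α)
    (hA : ∀ k, MeasurableSet (A k)) (hB : ∀ k, MeasurableSet (B k))
    (s : Finset ι) :
    ∀ D : Set α, MeasurableSet D → (∀ k ∈ s, A k ⊆ B k) →
    ∑ e ∈ s.powerset, (-1 : ℝ) ^ (s.card - e.card) *
        v (D ∩ ⋂ k ∈ s, (if k ∈ e then B k else A k))
      = v (D ∩ ⋂ k ∈ s, (B k \ A k)) := by
  induction s using Finset.induction_on with
  | empty => intro D hD _; simp
  | @insert a s' ha ih =>
    intro D hD hAB
    have hIm : ∀ e : Finset ι,
        MeasurableSet (⋂ k ∈ s', (if k ∈ e then B k else A k)) := fun e =>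
      MeasurableSet.biInter s'.countable_toSet (fun k _ => by
        by_cases h : k ∈ e <;> simp [h, hA k, hB k])
    rw [Finset.sum_powerset_insert ha, ← Finset.sum_add_distrib]
    have key : ∀ e ∈ s'.powerset,
        (-1 : ℝ) ^ ((insert a s').card - e.card) *
            v (D ∩ ⋂ k ∈ insert a s', (if k ∈ e then B k else A k)) +
          (-1 : ℝ) ^ ((insert a s').card - (insert a e).card) *
            v (D ∩ ⋂ k ∈ insert a s', (if k ∈ insert a e then B k else A k))
        = (-1 : ℝ) ^ (s'.card - e.card) *
            v ((D ∩ (B a \ A a)) ∩ ⋂ k ∈ s', (if k ∈ e then B k else A k)) := by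
      intro e he
      have hes : e ⊆ s' := Finset.mem_powerset.1 he
      have hae : a ∉ e := fun h => ha (hes h)
      have hcard : e.card ≤ s'.card := Finset.card_le_card hes
      set I := ⋂ k ∈ s', (if k ∈ e then B k else A k) with hI
      have h1 : ⋂ k ∈ insert a s', (if k ∈ e then B k else A k) = A a ∩ I := by
        rw [Finset.set_biInter_insert, if_neg hae]
      have h2 : ⋂ k ∈ insert a s', (if k ∈ insert a e then B k else A k) = B a ∩ I := by
        rw [Finset.set_biInter_insert, if_pos (Finset.mem_insert_self a e)]
        congr 1
        refine Set.iInter₂_congr fun k hk => ?_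
        have hka : k ≠ a := fun h => ha (h ▸ hk)
        simp [Finset.mem_insert, hka]
      have hc1 : (insert a s').card - e.card = (s'.card - e.card) + 1 := by
        rw [Finset.card_insert_of_notMem ha]
        omega
      have hc2 : (insert a s').card - (insert a e).card = s'.card - e.card := by
        rw [Finset.card_insert_of_notMem ha, Finset.card_insert_of_notMem hae]
        omega
      rw [h1, h2, hc1, hc2, pow_succ]
      have hdiff : v ((D ∩ I) ∩ (B a \ A a)) = v ((D ∩ I) ∩ B a) - v ((D ∩ I) ∩ A a) :=
        v_inter_diff v (hD.inter (hIm e)) (hA a) (hB a)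
          (hAB a (Finset.mem_insert_self a s'))
      have e1 : D ∩ (A a ∩ I) = (D ∩ I) ∩ A a := by
        ext y; simp only [Set.mem_inter_iff]; tauto
      have e2 : D ∩ (B a ∩ I) = (D ∩ I) ∩ B a := by
        ext y; simp only [Set.mem_inter_iff]; tauto
      have e3 : (D ∩ (B a \ A a)) ∩ I = (D ∩ I) ∩ (B a \ A a) := by
        ext y; simp only [Set.mem_inter_iff]; tauto
      rw [e1, e2, e3, hdiff]
      ring
    rw [Finset.sum_congr rfl key,
      ih (D ∩ (B a \ A a)) (hD.inter ((hB a).diff (hA a)))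
        (fun k hk => hAB k (Finset.mem_insert_of_mem hk))]
    rw [Finset.set_biInter_insert, ← Set.inter_assoc]

instance tv_finite (v : SignedMeasure α) : IsFiniteMeasure v.totalVariation := by
  rw [SignedMeasure.totalVariation]; infer_instance



abbrev Cube (d : ℕ) := ↥(Set.Icc (0 : Fin d → ℝ) 1)

def fmu (d : ℕ) (μ : SignedMeasure (Cube d)) : (Fin d → ℝ) → ℝ :=
  fun x => μ {y : Cube d | (y : Fin d → ℝ) ≤ x}

lemma coord_meas {d : ℕ} (k : Fin d) : Measurable fun y : Cube d => (y : Fin d → ℝ) k :=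
  (measurable_pi_apply k).comp measurable_subtype_coe

lemma meas_le_const {d : ℕ} (k : Fin d) (c : ℝ) :
    MeasurableSet {y : Cube d | (y : Fin d → ℝ) k ≤ c} :=
  measurableSet_le (coord_meas k) measurable_const

lemma meas_lt_const {d : ℕ} (k : Fin d) (c : ℝ) :
    MeasurableSet {y : Cube d | (y : Fin d → ℝ) k < c} :=
  measurableSet_lt (coord_meas k) measurable_const
lemma meas_lt_const' {d : ℕ} (k : Fin d) (c : ℝ) :
    MeasurableSet {y : Cube d | c < (y : Fin d → ℝ) k} :=
  measurableSet_lt measurable_const (coord_meas k)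


lemma meas_le_pt {d : ℕ} (x : Fin d → ℝ) :
    MeasurableSet {y : Cube d | (y : Fin d → ℝ) ≤ x} := by
  have : {y : Cube d | (y : Fin d → ℝ) ≤ x} = ⋂ k, {y : Cube d | (y : Fin d → ℝ) k ≤ x k} := by
    ext y; simp [Pi.le_def, Set.mem_iInter]
  rw [this]
  exact MeasurableSet.iInter fun k => meas_le_const k (x k)

lemma tendsto_sm {d : ℕ} (μ : SignedMeasure (Cube d)) (S : ℕ → Set (Cube d)) (T : Set (Cube d))
    (hS : ∀ n, MeasurableSet (S n)) (hT : MeasurableSet T)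
    (key : ∀ y : Cube d, ∀ᶠ n in atTop, (y ∈ S n ↔ y ∈ T)) :
    Tendsto (fun n => μ (S n)) atTop (nhds (μ T)) := by
  have hp := tendsto_measure_of_tendsto_indicator_of_isFiniteMeasure (As := S) (A := T)
    atTop μ.toJordanDecomposition.posPart hS key
  have hq := tendsto_measure_of_tendsto_indicator_of_isFiniteMeasure (As := S) (A := T)
    atTop μ.toJordanDecomposition.negPart hS key
  have hp' : Tendsto (fun n => (μ.toJordanDecomposition.posPart (S n)).toReal) atTop
      (nhds (μ.toJordanDecomposition.posPart T).toReal) :=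
    (ENNReal.tendsto_toReal (measure_ne_top _ _)).comp hp
  have hq' : Tendsto (fun n => (μ.toJordanDecomposition.negPart (S n)).toReal) atTop
      (nhds (μ.toJordanDecomposition.negPart T).toReal) :=
    (ENNReal.tendsto_toReal (measure_ne_top _ _)).comp hq
  have := hp'.sub hq'
  rw [← sm_apply_eq μ hT] at this
  refine this.congr fun n => (sm_apply_eq μ (hS n)).symm

lemma cadlag_fmu (d : ℕ) (μ : SignedMeasure (Cube d)) : HAL.IsCadlag d (fmu d μ) := by
  intro u hu a x hx hconv
  classical
  set T : Set (Cube d) :=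
    {y | ∀ k, if a k then (y : Fin d → ℝ) k ≤ u k else (y : Fin d → ℝ) k < u k} with hTdef
  have hTmeas : MeasurableSet T := by
    have : T = ⋂ k, {y : Cube d |
        if a k then (y : Fin d → ℝ) k ≤ u k else (y : Fin d → ℝ) k < u k} := by
      ext y; simp [hTdef, Set.mem_iInter]
    rw [this]
    refine MeasurableSet.iInter fun k => ?_
    by_cases hk : a k
    · simpa [hk] using meas_le_const k (u k)
    · simpa [hk] using meas_lt_const k (u k)
  have hxk : ∀ k, Tendsto (fun n => x n k) atTop (nhds (u k)) := fun k =>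
    (tendsto_pi_nhds.1 hconv) k
  have key : ∀ y : Cube d, ∀ᶠ n in atTop,
      (y ∈ {y : Cube d | (y : Fin d → ℝ) ≤ x n} ↔ y ∈ T) := by
    intro y
    by_cases hy : y ∈ T
    · have h1 : ∀ k, ∀ᶠ n in atTop, (y : Fin d → ℝ) k ≤ x n k := by
        intro k
        by_cases hk : a k
        · refine Eventually.of_forall fun n => ?_
          have h2 := hx n k
          rw [if_pos hk] at h2
          have h3 := hy k
          rw [if_pos hk] at h3
          exact le_trans h3 h2.1
        · have h3 := hy k
          rw [if_neg hk] at h3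
          exact ((hxk k).eventually (eventually_gt_nhds h3)).mono fun n h => le_of_lt h
      have h4 : ∀ᶠ n in atTop, ∀ k, (y : Fin d → ℝ) k ≤ x n k := eventually_all.2 h1
      exact h4.mono fun n hn => iff_of_true (fun k => hn k) hy
    · have : ∃ k, ¬ (if a k then (y : Fin d → ℝ) k ≤ u k else (y : Fin d → ℝ) k < u k) := by
        by_contra h
        push_neg at h
        exact hy fun k => h k
      obtain ⟨k, hk⟩ := this
      by_cases hak : a k
      · rw [if_pos hak] at hk
        push_neg at hk
        refine ((hxk k).eventually (eventually_lt_nhds hk)).mono fun n hn => iff_of_false ?_ hy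
        intro hle
        exact absurd (hle k) (not_le.2 hn)
      · rw [if_neg hak] at hk
        push_neg at hk
        refine Eventually.of_forall fun n => iff_of_false ?_ hy
        intro hle
        have h2 := hx n k
        rw [if_neg hak] at h2
        exact absurd (lt_of_le_of_lt (le_trans hk (hle k)) h2.2) (lt_irrefl _)
  refine ⟨μ T, ?_, ?_⟩
  · exact HALProof.tendsto_sm μ _ T (fun n => meas_le_pt (x n)) hTmeas key
  · intro hak
    have : T = {y : Cube d | (y : Fin d → ℝ) ≤ u} := by
      ext y
      simp only [hTdef, Set.mem_setOf_eq, Pi.le_def]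
      constructor
      · intro h k; have := h k; rwa [if_pos (hak k)] at this
      · intro h k; rw [if_pos (hak k)]; exact h k
    rw [this]; rfl

section Grid

variable {d : ℕ}

lemma grid_t_le {s : Finset (Fin d)} (G : HAL.SectionGrid d s) (k : Fin d) :
    ∀ i' i : ℕ, i ≤ i' → i' ≤ G.L k → G.t k i ≤ G.t k i' := by
  intro i'
  induction i' with
  | zero => intro i h _; obtain rfl : i = 0 := Nat.le_zero.1 h; exact le_rfl
  | succ n ih =>
    intro i h hle
    rcases eq_or_lt_of_le h with rfl | h'
    · exact le_rfl
    · have h2 : i ≤ n := Nat.lt_succ_iff.1 h'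
      exact le_trans (ih i h2 (Nat.le_of_succ_le hle))
        (le_of_lt (G.tmono k n (Nat.lt_of_succ_le hle)))

lemma grid_t_nonneg {s : Finset (Fin d)} (G : HAL.SectionGrid d s) (k : Fin d) {i : ℕ}
    (hi : i ≤ G.L k) : 0 ≤ G.t k i := by
  have := grid_t_le G k i 0 (Nat.zero_le i) hi
  rwa [G.t0 k] at this

/-- The partition pieces of the cube indexed by subsets of coordinates. -/
def Es (d : ℕ) (s : Finset (Fin d)) : Set (Cube d) :=
  {y | ∀ k, (k ∈ s → 0 < (y : Fin d → ℝ) k) ∧ (k ∉ s → (y : Fin d → ℝ) k ≤ 0)}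

lemma Es_meas (d : ℕ) (s : Finset (Fin d)) : MeasurableSet (Es d s) := by
  classical
  have h : Es d s = ⋂ k, (if k ∈ s then {y : Cube d | 0 < (y : Fin d → ℝ) k}
      else {y : Cube d | (y : Fin d → ℝ) k ≤ 0}) := by
    ext y
    simp only [Es, Set.mem_setOf_eq, Set.mem_iInter]
    constructor
    · intro hy k
      by_cases hk : k ∈ s
      · simp only [if_pos hk]; exact (hy k).1 hk
      · simp only [if_neg hk]; exact (hy k).2 hk
    · intro hy k
      constructor
      · intro hk; have := hy k; rwa [if_pos hk] at this
      · intro hk; have := hy k; rwa [if_neg hk] at this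
  rw [h]
  refine MeasurableSet.iInter fun k => ?_
  by_cases hk : k ∈ s
  · rw [if_pos hk]; exact meas_lt_const' k 0
  · rw [if_neg hk]; exact meas_le_const k 0

lemma gridsum_le (d : ℕ) (μ : SignedMeasure (Cube d)) (s : Finset (Fin d))
    (G : HAL.SectionGrid d s) :
    ENNReal.ofReal (HAL.gridVariationSum (fmu d μ) G) ≤ μ.totalVariation (Es d s) := by
  classical
  set J := Fintype.piFinset (fun k => Finset.Icc 1 (G.L k)) with hJ
  set D : Set (Cube d) := {y | ∀ k, k ∉ s → (y : Fin d → ℝ) k ≤ 0} with hD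
  have hDmeas : MeasurableSet D := by
    have : D = ⋂ k, ⋂ (_ : k ∉ s), {y : Cube d | (y : Fin d → ℝ) k ≤ 0} := by
      ext y; simp [hD, Set.mem_iInter]
    rw [this]
    exact MeasurableSet.iInter fun k => MeasurableSet.iInter fun _ => meas_le_const k 0
  set A : (Fin d → ℕ) → Fin d → Set (Cube d) :=
    fun j k => {y | (y : Fin d → ℝ) k ≤ G.t k (j k - 1)} with hA
  set B : (Fin d → ℕ) → Fin d → Set (Cube d) :=
    fun j k => {y | (y : Fin d → ℝ) k ≤ G.t k (j k)} with hB
  set Box : (Fin d → ℕ) → Set (Cube d) :=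
    fun j => D ∩ ⋂ k ∈ s, (B j k \ A j k) with hBox
  have hjk : ∀ j ∈ J, ∀ k, 1 ≤ j k ∧ j k ≤ G.L k := by
    intro j hj k
    have := (Fintype.mem_piFinset.1 hj) k
    simpa [Finset.mem_Icc] using this
  have hBoxMeas : ∀ j, MeasurableSet (Box j) := by
    intro j
    refine hDmeas.inter (MeasurableSet.biInter s.countable_toSet fun k _ => ?_)
    exact (meas_le_const k _).diff (meas_le_const k _)
  -- quasi volume = μ (Box j)
  have hQV : ∀ j ∈ J, HAL.boxQuasiVolume (fmu d μ) G j = μ (Box j) := by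
    intro j hj
    have hvert : ∀ e ∈ s.powerset,
        {y : Cube d | (y : Fin d → ℝ) ≤ HAL.gridVertex G j e}
          = D ∩ ⋂ k ∈ s, (if k ∈ e then B j k else A j k) := by
      intro e _
      ext y
      simp only [Set.mem_setOf_eq, Pi.le_def, Set.mem_inter_iff, Set.mem_iInter, hD, hA, hB,
        HAL.gridVertex]
      constructor
      · intro h
        refine ⟨fun k hk => by simpa [hk] using h k, fun k hk => ?_⟩
        have := h k
        by_cases hke : k ∈ e
        · simpa [hk, hke] using this
        · simpa [hk, hke] using this
      · rintro ⟨h1, h2⟩ k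
        by_cases hk : k ∈ s
        · have := h2 k hk
          by_cases hke : k ∈ e <;> simp only [hke, if_true, if_false] at this <;>
            simpa [hk, hke] using this
        · simpa [hk] using h1 k hk
    have := sm_incl_excl μ (A j) (B j)
      (fun k => meas_le_const k _) (fun k => meas_le_const k _) s D hDmeas
      (fun k hk => by
        intro y hy
        have h1 := (hjk j hj k).1
        have h2 := (hjk j hj k).2
        have hle : G.t k (j k - 1) ≤ G.t k (j k) :=
          grid_t_le G k (j k) (j k - 1) (Nat.sub_le _ _) h2
        exact le_trans hy hle)
    rw [HAL.boxQuasiVolume, ← this]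
    refine Finset.sum_congr rfl fun e he => ?_
    rw [fmu, ← hvert e he]
  -- Box j ⊆ Es d s
  have hBoxSub : ∀ j ∈ J, Box j ⊆ Es d s := by
    intro j hj y hy
    obtain ⟨hy1, hy2⟩ := hy
    simp only [Set.mem_iInter] at hy2
    intro k
    refine ⟨fun hk => ?_, fun hk => hy1 k hk⟩
    obtain ⟨-, hnA⟩ := hy2 k hk
    have : G.t k (j k - 1) < (y : Fin d → ℝ) k := lt_of_not_ge (by simpa [hA] using hnA)
    exact lt_of_le_of_lt (grid_t_nonneg G k (le_trans (Nat.sub_le _ _) (hjk j hj k).2)) this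
  -- pairwise disjoint
  have hdisj : Set.PairwiseDisjoint (↑J) Box := by
    intro j hj j' hj' hne
    have hk : ∃ k, k ∈ s ∧ j k ≠ j' k := by
      have : ∃ k, j k ≠ j' k := by
        by_contra h
        push_neg at h
        exact hne (funext h)
      obtain ⟨k, hkne⟩ := this
      refine ⟨k, ?_, hkne⟩
      by_contra hks
      have h1 := (hjk j hj k)
      have h2 := (hjk j' hj' k)
      have hL := G.Lout k hks
      omega
    obtain ⟨k, hks, hkne⟩ := hk
    have main : ∀ j₁ j₂ : Fin d → ℕ, j₁ ∈ J → j₂ ∈ J → j₁ k < j₂ k →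
        ∀ y : Cube d, y ∈ Box j₁ → y ∈ Box j₂ → False := by
      intro j₁ j₂ hj₁ hj₂ hlt y hy1 hy2
      obtain ⟨-, hy1b⟩ := hy1
      obtain ⟨-, hy2b⟩ := hy2
      simp only [Set.mem_iInter] at hy1b hy2b
      obtain ⟨hyB, -⟩ := hy1b k hks
      obtain ⟨-, hynA⟩ := hy2b k hks
      have hle : G.t k (j₁ k) ≤ G.t k (j₂ k - 1) :=
        grid_t_le G k (j₂ k - 1) (j₁ k) (by omega) (le_trans (Nat.sub_le _ _) (hjk j₂ hj₂ k).2)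
      have : (y : Fin d → ℝ) k ≤ G.t k (j₂ k - 1) := le_trans (by simpa [hB] using hyB) hle
      exact hynA (by simpa [hA] using this)
    rw [Function.onFun, Set.disjoint_left]
    intro y hy1 hy2
    rcases lt_or_gt_of_ne hkne with h | h
    · exact main j j' hj hj' h y hy1 hy2
    · exact main j' j hj' hj h y hy2 hy1
  -- chain
  have step1 : HAL.gridVariationSum (fmu d μ) G ≤ ∑ j ∈ J, (μ.totalVariation (Box j)).toReal := by
    rw [HAL.gridVariationSum]
    refine Finset.sum_le_sum fun j hj => ?_
    rw [hQV j hj]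
    exact abs_le_tv μ (hBoxMeas j)
  have step2 : ∑ j ∈ J, (μ.totalVariation (Box j)).toReal
      = (μ.totalVariation (⋃ j ∈ J, Box j)).toReal := by
    rw [measure_biUnion_finset hdisj (fun j _ => hBoxMeas j),
      ENNReal.toReal_sum (fun j _ => measure_ne_top _ _)]
  have step3 : μ.totalVariation (⋃ j ∈ J, Box j) ≤ μ.totalVariation (Es d s) :=
    measure_mono (Set.iUnion₂_subset fun j hj => hBoxSub j hj)
  refine ENNReal.ofReal_le_of_le_toReal ?_
  calc HAL.gridVariationSum (fmu d μ) G
      ≤ (μ.totalVariation (⋃ j ∈ J, Box j)).toReal := by rw [← step2]; exact step1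
    _ ≤ (μ.totalVariation (Es d s)).toReal :=
        ENNReal.toReal_mono (measure_ne_top _ _) step3

end Grid

lemma svn_fmu_le (d : ℕ) (μ : SignedMeasure (Cube d)) :
    HAL.svn d (fmu d μ) ≤ μ.totalVariation Set.univ := by
  classical
  have h0 : ENNReal.ofReal |fmu d μ 0| ≤ μ.totalVariation (Es d ∅) := by
    have heq : fmu d μ 0 = μ (Es d ∅) := by
      rw [fmu]
      congr 1
      ext y
      simp [Es, Pi.le_def]
    rw [heq]
    exact ENNReal.ofReal_le_of_le_toReal (abs_le_tv μ (Es_meas d ∅))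
  have hs : ∀ s : Finset (Fin d), HAL.sectionVitali d (fmu d μ) s ≤ μ.totalVariation (Es d s) :=
    fun s => iSup_le fun G => gridsum_le d μ s G
  have hdisj : Set.PairwiseDisjoint
      (↑((Finset.univ : Finset (Fin d)).powerset)) (Es d) := by
    intro s hs' s' hs'' hne
    rw [Function.onFun, Set.disjoint_left]
    intro y hy1 hy2
    have : ∃ k, ¬ (k ∈ s ↔ k ∈ s') := by
      by_contra h
      push_neg at h
      exact hne (Finset.ext fun k => h k)
    obtain ⟨k, hk⟩ := this
    by_cases hks : k ∈ s
    · have hks' : k ∉ s' := fun h => hk ⟨fun _ => h, fun _ => hks⟩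
      exact absurd ((hy1 k).1 hks) (not_lt.2 ((hy2 k).2 hks'))
    · have hks' : k ∈ s' := by
        by_contra h
        exact hk ⟨fun h' => absurd h' hks, fun h' => absurd h' h⟩
      exact absurd ((hy2 k).1 hks') (not_lt.2 ((hy1 k).2 hks))
  calc HAL.svn d (fmu d μ)
      ≤ μ.totalVariation (Es d ∅) +
        ∑ s ∈ (Finset.univ : Finset (Fin d)).powerset.erase ∅, μ.totalVariation (Es d s) :=
        add_le_add h0 (Finset.sum_le_sum fun s _ => hs s)
    _ = ∑ s ∈ (Finset.univ : Finset (Fin d)).powerset, μ.totalVariation (Es d s) :=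
        Finset.add_sum_erase _ (fun s => μ.totalVariation (Es d s)) (Finset.empty_mem_powerset _)
    _ = μ.totalVariation (⋃ s ∈ (Finset.univ : Finset (Fin d)).powerset, Es d s) :=
        (measure_biUnion_finset hdisj (fun s _ => Es_meas d s)).symm
    _ ≤ μ.totalVariation Set.univ := measure_mono (Set.subset_univ _)


end HALProof

/-- every finite signed Borel measure `μ` on the unit cube with
`‖μ‖_TV ≤ M` is represented by a unique function `f_μ ∈ D^d_M` via `f_μ x = μ [0, x]`. -/
theorem exists_unique_Dset_of_signedMeasure
    (d : ℕ) (hd : 1 ≤ d) (M : ℝ) (hM : 0 < M)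
    (μ : MeasureTheory.SignedMeasure ↥(Set.Icc (0 : Fin d → ℝ) 1))
    (hμ : μ.totalVariation Set.univ ≤ ENNReal.ofReal M) :
    ∃ f ∈ HAL.Dset d M,
      (∀ x ∈ Set.Icc (0 : Fin d → ℝ) 1,
        f x = μ {y : ↥(Set.Icc (0 : Fin d → ℝ) 1) | (y : Fin d → ℝ) ≤ x}) ∧
      ∀ g ∈ HAL.Dset d M,
        (∀ x ∈ Set.Icc (0 : Fin d → ℝ) 1,
          g x = μ {y : ↥(Set.Icc (0 : Fin d → ℝ) 1) | (y : Fin d → ℝ) ≤ x}) →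
        Set.EqOn g f (Set.Icc (0 : Fin d → ℝ) 1) := by
  classical
  refine ⟨HALProof.fmu d μ, ⟨HALProof.cadlag_fmu d μ,
    le_trans (HALProof.svn_fmu_le d μ) hμ⟩, fun x _ => rfl, ?_⟩
  intro g _ hgx x hx
  rw [hgx x hx]
  rfl
end
end

section
/- Fix an integer d ≥ 1 and M ∈ (0,∞), and let f ∈ D^d_M. For each nonempty s ⊆ {1,…,d} let μ_{f_s} be the unique finite signed Borel measure on [0,1]^{|s|} with f_s(y) = μ_{f_s}([0_s, y]) for all y ∈ [0,1]^{|s|} (which exists since f_s ∈ D^{|s|}_M). Then for every x ∈ [0,1]^d, f(x) = f(0) + Σ_{∅≠s⊆{1,…,d}} μ_{f_s}((0_s, x_s]), where x_s is the subvector of x with indices in s; moreover ‖f‖_v = |f(0)| + Σ_{∅≠s⊆{1,…,d}} |μ_{f_s}|((0_s, 1_s]), where |μ| = μ₊ + μ₋. -/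
open MeasureTheory Filter Set
open scoped ENNReal NNReal

noncomputable section

namespace HAL

/-- The section `f_s : [0,1]^{|s|} → ℝ` of `f`, obtained by fixing the coordinates
outside `s` at `0` and reindexing the coordinates in `s` in increasing order. -/
noncomputable def sectionFun (d : ℕ) (f : (Fin d → ℝ) → ℝ) (s : Finset (Fin d)) :
    (Fin s.card → ℝ) → ℝ :=
  fun y => f (fun k => if h : k ∈ s then y ((s.orderIsoOfFin rfl).symm ⟨k, h⟩) else 0)

/-- The subvector `x_s ∈ [0,1]^{|s|}` of `x ∈ [0,1]^d`. -/
noncomputable def subvector (d : ℕ) (x : Fin d → ℝ) (s : Finset (Fin d)) :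
    Fin s.card → ℝ :=
  fun i => x ((s.orderIsoOfFin rfl) i)

end HAL

namespace HALaux

/-- Inclusion-exclusion for signed measures. -/
theorem sm_ie {α : Type*} [MeasurableSpace α] (μ : SignedMeasure α) {ι : Type*}
    [DecidableEq ι] (B : ι → Set α) (hB : ∀ i, MeasurableSet (B i)) (s : Finset ι) :
    ∀ T : Set α, MeasurableSet T →
    μ (T ∩ ⋂ i ∈ s, (B i)ᶜ) =
      ∑ e ∈ s.powerset, (-1 : ℝ) ^ (s.card - e.card) * μ (T ∩ ⋂ i ∈ (s \ e), B i) := by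
  classical
  induction s using Finset.induction with
  | empty => intro T hT; simp
  | @insert a s ha ih =>
    intro T hT
    have hBi : ∀ (u : Finset ι), MeasurableSet (⋂ i ∈ u, B i) := fun u =>
      MeasurableSet.biInter u.countable_toSet (fun i _ => hB i)
    have hBc : ∀ (u : Finset ι), MeasurableSet (⋂ i ∈ u, (B i)ᶜ) := fun u =>
      MeasurableSet.biInter u.countable_toSet (fun i _ => (hB i).compl)
    -- split LHS
    have hsplit : μ (T ∩ ⋂ i ∈ s, (B i)ᶜ) =
        μ ((T ∩ B a) ∩ ⋂ i ∈ s, (B i)ᶜ) + μ (T ∩ ⋂ i ∈ insert a s, (B i)ᶜ) := by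
      have h1 : T ∩ ⋂ i ∈ s, (B i)ᶜ =
          ((T ∩ B a) ∩ ⋂ i ∈ s, (B i)ᶜ) ∪ (T ∩ ⋂ i ∈ insert a s, (B i)ᶜ) := by
        rw [Finset.set_biInter_insert]
        ext z
        by_cases hz : z ∈ B a <;> simp [hz] <;> tauto
      rw [h1, VectorMeasure.of_union ?_ ((hT.inter (hB a)).inter (hBc s))
        (hT.inter (hBc (insert a s)))]
      · rw [Finset.set_biInter_insert]
        rw [Set.disjoint_left]
        rintro z ⟨⟨-, hz⟩, -⟩ ⟨-, hz2, -⟩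
        exact hz2 hz
    have key : μ (T ∩ ⋂ i ∈ insert a s, (B i)ᶜ) =
        μ (T ∩ ⋂ i ∈ s, (B i)ᶜ) - μ ((T ∩ B a) ∩ ⋂ i ∈ s, (B i)ᶜ) := by
      rw [hsplit]; ring
    rw [key, ih T hT, ih (T ∩ B a) (hT.inter (hB a)),
      Finset.sum_powerset_insert ha]
    have e1 : ∑ e ∈ s.powerset, (-1:ℝ) ^ ((insert a s).card - e.card) *
          μ (T ∩ ⋂ i ∈ insert a s \ e, B i)
        = ∑ e ∈ s.powerset, (-((-1:ℝ) ^ (s.card - e.card) *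
            μ ((T ∩ B a) ∩ ⋂ i ∈ s \ e, B i))) := by
      apply Finset.sum_congr rfl
      intro e he
      rw [Finset.mem_powerset] at he
      have hae : a ∉ e := fun h => ha (he h)
      have h1 : insert a s \ e = insert a (s \ e) := by
        rw [Finset.insert_sdiff_of_notMem _ hae]
      have h2 : (insert a s).card - e.card = (s.card - e.card) + 1 := by
        rw [Finset.card_insert_of_notMem ha]
        have := Finset.card_le_card he
        omega
      rw [h1, h2, Finset.set_biInter_insert]
      have h3 : T ∩ (B a ∩ ⋂ i ∈ s \ e, B i) = (T ∩ B a) ∩ ⋂ i ∈ s \ e, B i := by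
        rw [Set.inter_assoc]
      rw [h3]; ring
    have e2 : ∑ e ∈ s.powerset, (-1:ℝ) ^ ((insert a s).card - (insert a e).card) *
          μ (T ∩ ⋂ i ∈ insert a s \ insert a e, B i)
        = ∑ e ∈ s.powerset, (-1:ℝ) ^ (s.card - e.card) * μ (T ∩ ⋂ i ∈ s \ e, B i) := by
      apply Finset.sum_congr rfl
      intro e he
      rw [Finset.mem_powerset] at he
      have hae : a ∉ e := fun h => ha (he h)
      have h1 : insert a s \ insert a e = s \ e := by
        ext x
        simp only [Finset.mem_sdiff, Finset.mem_insert, not_or]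
        constructor
        · rintro ⟨hx1, hx2, hx3⟩
          exact ⟨hx1.resolve_left hx2, hx3⟩
        · rintro ⟨hx1, hx2⟩
          exact ⟨Or.inr hx1, fun h => ha (h ▸ hx1), hx2⟩
      have h2 : (insert a s).card - (insert a e).card = s.card - e.card := by
        rw [Finset.card_insert_of_notMem ha, Finset.card_insert_of_notMem hae]
        omega
      rw [h1, h2]
    rw [e1, e2, Finset.sum_neg_distrib]
    ring

end HALaux

namespace HALcore
open HALaux

variable {d : ℕ}

theorem measurable_coord_le {n : ℕ} (i : Fin n) (c : ℝ) :
    MeasurableSet {z : ↥(Set.Icc (0 : Fin n → ℝ) 1) | (z : Fin n → ℝ) i ≤ c} :=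
  measurableSet_le measurable_subtype_coe.eval measurable_const

theorem muBox (d : ℕ) (f : (Fin d → ℝ) → ℝ) (s : Finset (Fin d))
    (μ : MeasureTheory.SignedMeasure ↥(Set.Icc (0 : Fin s.card → ℝ) 1))
    (hμ : ∀ y ∈ Set.Icc (0 : Fin s.card → ℝ) 1,
      HAL.sectionFun d f s y =
        μ {z : ↥(Set.Icc (0 : Fin s.card → ℝ) 1) | (z : Fin s.card → ℝ) ≤ y})
    (lo hi : Fin d → ℝ) (hlo : ∀ k ∈ s, 0 ≤ lo k) (hlohi : ∀ k ∈ s, lo k ≤ hi k)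
    (hhi : ∀ k ∈ s, hi k ≤ 1) :
    μ {z : ↥(Set.Icc (0 : Fin s.card → ℝ) 1) |
        ∀ i, lo ((s.orderIsoOfFin rfl) i) < (z : Fin s.card → ℝ) i ∧
          (z : Fin s.card → ℝ) i ≤ hi ((s.orderIsoOfFin rfl) i)} =
      ∑ e ∈ s.powerset, (-1 : ℝ) ^ (s.card - e.card) *
        f (fun k => if k ∈ s then (if k ∈ e then hi k else lo k) else 0) := by
  classical
  set I := s.orderIsoOfFin rfl with hI
  set B : Fin d → Set ↥(Set.Icc (0 : Fin s.card → ℝ) 1) := fun k =>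
    if h : k ∈ s then {z | (z : Fin s.card → ℝ) (I.symm ⟨k, h⟩) ≤ lo k} else ∅ with hB
  set T : Set ↥(Set.Icc (0 : Fin s.card → ℝ) 1) :=
    {z | ∀ i, (z : Fin s.card → ℝ) i ≤ hi (I i)} with hT
  have hBm : ∀ k, MeasurableSet (B k) := by
    intro k
    rw [hB]
    by_cases h : k ∈ s
    · simp only [dif_pos h]; exact measurable_coord_le _ _
    · simp only [dif_neg h]; exact MeasurableSet.empty
  have hTm : MeasurableSet T := by
    have : T = ⋂ i, {z : ↥(Set.Icc (0 : Fin s.card → ℝ) 1) | (z : Fin s.card → ℝ) i ≤ hi (I i)} := by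
      ext z; simp [hT]
    rw [this]
    exact MeasurableSet.iInter fun i => measurable_coord_le _ _
  -- the corner set is T ∩ ⋂ (B k)ᶜ
  have hcorner : {z : ↥(Set.Icc (0 : Fin s.card → ℝ) 1) |
      ∀ i, lo (I i) < (z : Fin s.card → ℝ) i ∧ (z : Fin s.card → ℝ) i ≤ hi (I i)} =
      T ∩ ⋂ k ∈ s, (B k)ᶜ := by
    ext z
    simp only [Set.mem_setOf_eq, Set.mem_inter_iff, Set.mem_iInter, Set.mem_compl_iff, hT, hB]
    constructor
    · intro h
      refine ⟨fun i => (h i).2, fun k hk => ?_⟩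
      simp only [dif_pos hk, Set.mem_setOf_eq, not_le]
      have := (h (I.symm ⟨k, hk⟩)).1
      rwa [OrderIso.apply_symm_apply] at this
    · rintro ⟨h1, h2⟩ i
      refine ⟨?_, h1 i⟩
      have hk : (↑(I i) : Fin d) ∈ s := (I i).2
      have := h2 _ hk
      simp only [dif_pos hk, Set.mem_setOf_eq, not_le] at this
      rwa [show I.symm ⟨↑(I i), hk⟩ = i by
        rw [show (⟨↑(I i), hk⟩ : {x // x ∈ s}) = I i from Subtype.ext rfl,
          OrderIso.symm_apply_apply]] at this
  rw [hcorner, sm_ie μ B hBm s T hTm]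
  apply Finset.sum_congr rfl
  intro e he
  rw [Finset.mem_powerset] at he
  congr 1
  -- μ (T ∩ ⋂ k ∈ s \ e, B k) = f (vertex)
  set y : Fin s.card → ℝ := fun i => if (↑(I i) : Fin d) ∈ e then hi ↑(I i) else lo ↑(I i) with hy
  have hyIcc : y ∈ Set.Icc (0 : Fin s.card → ℝ) 1 := by
    constructor <;> intro i <;> simp only [hy, Pi.zero_apply, Pi.one_apply]
    · by_cases hc : (↑(I i) : Fin d) ∈ e
      · simp only [if_pos hc]; exact le_trans (hlo _ (I i).2) (hlohi _ (I i).2)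
      · simp only [if_neg hc]; exact hlo _ (I i).2
    · by_cases hc : (↑(I i) : Fin d) ∈ e
      · simp only [if_pos hc]; exact hhi _ (I i).2
      · simp only [if_neg hc]; exact le_trans (hlohi _ (I i).2) (hhi _ (I i).2)
  have hset : T ∩ ⋂ k ∈ s \ e, B k =
      {z : ↥(Set.Icc (0 : Fin s.card → ℝ) 1) | (z : Fin s.card → ℝ) ≤ y} := by
    ext z
    simp only [Set.mem_inter_iff, Set.mem_iInter, Set.mem_setOf_eq, hT, hB, Pi.le_def,
      Finset.mem_sdiff]
    constructor
    · rintro ⟨h1, h2⟩ i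
      by_cases hc : (↑(I i) : Fin d) ∈ e
      · simp only [hy, if_pos hc]; exact h1 i
      · simp only [hy, if_neg hc]
        have hk : (↑(I i) : Fin d) ∈ s := (I i).2
        have := h2 _ ⟨hk, hc⟩
        simp only [dif_pos hk, Set.mem_setOf_eq] at this
        rwa [show I.symm ⟨↑(I i), hk⟩ = i by
          rw [show (⟨↑(I i), hk⟩ : {x // x ∈ s}) = I i from Subtype.ext rfl,
            OrderIso.symm_apply_apply]] at this
    · intro h
      constructor
      · intro i
        have := h i
        by_cases hc : (↑(I i) : Fin d) ∈ e
        · simpa only [hy, if_pos hc] using this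
        · simp only [hy, if_neg hc] at this
          exact le_trans this (hlohi _ (I i).2)
      · rintro k ⟨hk, hke⟩
        simp only [dif_pos hk, Set.mem_setOf_eq]
        have := h (I.symm ⟨k, hk⟩)
        have hco : (↑(I (I.symm ⟨k, hk⟩)) : Fin d) = k := by
          rw [OrderIso.apply_symm_apply]
        simp only [hy] at this
        rw [hco] at this
        rwa [if_neg hke] at this
  rw [hset, ← hμ y hyIcc]
  -- sectionFun equals f at the vertex
  unfold HAL.sectionFun
  congr 1
  funext k
  by_cases h : k ∈ s
  · simp only [dif_pos h, if_pos h, hy]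
    have hco : (↑(I (I.symm ⟨k, h⟩)) : Fin d) = k := by rw [OrderIso.apply_symm_apply]
    rw [hco]
  · simp only [dif_neg h, if_neg h]

end HALcore


namespace HALcomb

theorem comb (d : ℕ) (g : Finset (Fin d) → ℝ) :
    ∑ s ∈ (Finset.univ : Finset (Fin d)).powerset.erase ∅,
      ∑ e ∈ s.powerset, (-1:ℝ)^(s.card - e.card) * g e
    = g Finset.univ - g ∅ := by
  classical
  have hmem : (∅ : Finset (Fin d)) ∈ (Finset.univ : Finset (Fin d)).powerset :=
    Finset.mem_powerset.2 (Finset.empty_subset _)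
  have hempty : ∑ e ∈ (∅ : Finset (Fin d)).powerset,
      (-1:ℝ)^((∅ : Finset (Fin d)).card - e.card) * g e = g ∅ := by
    simp
  have herase := Finset.sum_erase_eq_sub (f := fun s : Finset (Fin d) =>
    ∑ e ∈ s.powerset, (-1:ℝ)^(s.card - e.card) * g e) hmem
  rw [herase]
  rw [hempty]
  congr 1
  -- ∑_{s ⊆ univ} ∑_{e ⊆ s} = g univ
  rw [Finset.sum_comm' (t' := (Finset.univ : Finset (Fin d)).powerset)
    (s' := fun e => (Finset.univ : Finset (Fin d)).powerset.filter (fun s => e ⊆ s))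
    (by
      intro s e
      simp only [Finset.mem_powerset, Finset.mem_filter, Finset.mem_powerset]
      constructor
      · rintro ⟨h1, h2⟩; exact ⟨⟨h1, h2⟩, h2.trans h1⟩
      · rintro ⟨⟨h1, h2⟩, h3⟩; exact ⟨h1, h2⟩)]
  -- inner sum over supersets of e
  have inner : ∀ e : Finset (Fin d), e ∈ (Finset.univ : Finset (Fin d)).powerset →
      ∑ s ∈ (Finset.univ : Finset (Fin d)).powerset.filter (fun s => e ⊆ s),
        (-1:ℝ)^(s.card - e.card) * g e
      = (if e = Finset.univ then (1:ℝ) else 0) * g e := by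
    intro e _
    rw [← Finset.sum_mul]
    congr 1
    -- reindex by w = s \ e  over subsets of eᶜ
    have hbij : ∑ s ∈ (Finset.univ : Finset (Fin d)).powerset.filter (fun s => e ⊆ s),
        (-1:ℝ)^(s.card - e.card) = ∑ w ∈ eᶜ.powerset, (-1:ℝ)^w.card := by
      apply Finset.sum_nbij' (i := fun s => s \ e) (j := fun w => e ∪ w)
      · intro s hs
        simp only [Finset.mem_filter, Finset.mem_powerset] at hs
        simp only [Finset.mem_powerset]
        intro k hk
        rw [Finset.mem_sdiff] at hk
        simp [Finset.mem_compl, hk.2]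
      · intro w hw
        simp only [Finset.mem_powerset] at hw
        simp only [Finset.mem_filter, Finset.mem_powerset]
        exact ⟨Finset.subset_univ _, Finset.subset_union_left⟩
      · intro s hs
        simp only [Finset.mem_filter, Finset.mem_powerset] at hs
        exact Finset.union_sdiff_of_subset hs.2
      · intro w hw
        simp only [Finset.mem_powerset] at hw
        apply Finset.union_sdiff_cancel_left
        rw [Finset.disjoint_left]
        intro k hk hkw
        exact (Finset.mem_compl.1 (hw hkw)) hk
      · intro s hs
        simp only [Finset.mem_filter, Finset.mem_powerset] at hs
        congr 1
        rw [Finset.card_sdiff_of_subset hs.2]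
    rw [hbij]
    have : ∑ w ∈ eᶜ.powerset, (-1:ℝ)^w.card =
        ((∑ w ∈ eᶜ.powerset, (-1:ℤ)^w.card : ℤ) : ℝ) := by push_cast; rfl
    rw [this, Finset.sum_powerset_neg_one_pow_card]
    by_cases h : eᶜ = ∅
    · rw [if_pos h, if_pos (by rwa [← Finset.compl_eq_empty_iff])]
      norm_num
    · rw [if_neg h, if_neg (by rw [← Finset.compl_eq_empty_iff] at *; exact h)]
      norm_num
  have h2 : ∑ e ∈ (Finset.univ : Finset (Fin d)).powerset,
      (if e = Finset.univ then (1:ℝ) else 0) * g e = g Finset.univ := by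
    rw [Finset.sum_eq_single Finset.univ]
    · simp
    · intro b _ hb; simp [hb]
    · intro h; exact absurd (Finset.mem_powerset.2 (Finset.Subset.refl _)) h
  rw [Finset.sum_congr rfl inner, h2]

end HALcomb


namespace HALpart1
open HALcore HALcomb

theorem part1 (d : ℕ) (f : (Fin d → ℝ) → ℝ)
    (μ : (s : Finset (Fin d)) → MeasureTheory.SignedMeasure ↥(Set.Icc (0 : Fin s.card → ℝ) 1))
    (hμ : ∀ s : Finset (Fin d), s.Nonempty → ∀ y ∈ Set.Icc (0 : Fin s.card → ℝ) 1,
      HAL.sectionFun d f s y = μ s {z : ↥(Set.Icc (0 : Fin s.card → ℝ) 1) | (z : Fin s.card → ℝ) ≤ y})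
    (x : Fin d → ℝ) (hx : x ∈ Set.Icc (0 : Fin d → ℝ) 1) :
    f x = f 0 + ∑ s ∈ (Finset.univ : Finset (Fin d)).powerset.erase ∅,
      μ s {z : ↥(Set.Icc (0 : Fin s.card → ℝ) 1) |
        ∀ i, 0 < (z : Fin s.card → ℝ) i ∧
          (z : Fin s.card → ℝ) i ≤ HAL.subvector d x s i} := by
  classical
  have key : ∀ s ∈ (Finset.univ : Finset (Fin d)).powerset.erase ∅,
      (μ s {z : ↥(Set.Icc (0 : Fin s.card → ℝ) 1) |
        ∀ i, 0 < (z : Fin s.card → ℝ) i ∧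
          (z : Fin s.card → ℝ) i ≤ HAL.subvector d x s i} : ℝ)
      = ∑ e ∈ s.powerset, (-1:ℝ)^(s.card - e.card) *
          f (fun k => if k ∈ e then x k else 0) := by
    intro s hs
    have hsne : s.Nonempty :=
      Finset.nonempty_of_ne_empty (Finset.ne_of_mem_erase hs)
    have hmb := HALcore.muBox d f s (μ s) (hμ s hsne) (fun _ => 0) x
      (fun k _ => le_refl 0) (fun k _ => hx.1 k) (fun k _ => hx.2 k)
    have hset : {z : ↥(Set.Icc (0 : Fin s.card → ℝ) 1) |
        ∀ i, 0 < (z : Fin s.card → ℝ) i ∧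
          (z : Fin s.card → ℝ) i ≤ HAL.subvector d x s i} =
        {z : ↥(Set.Icc (0 : Fin s.card → ℝ) 1) |
        ∀ i, (fun _ => (0:ℝ)) ((s.orderIsoOfFin rfl) i) < (z : Fin s.card → ℝ) i ∧
          (z : Fin s.card → ℝ) i ≤ x ((s.orderIsoOfFin rfl) i)} := rfl
    rw [hset, hmb]
    apply Finset.sum_congr rfl
    intro e he
    rw [Finset.mem_powerset] at he
    refine congrArg (fun v => (-1:ℝ)^(s.card - e.card) * f v) (funext fun k => ?_)
    by_cases h : k ∈ s
    · simp only [if_pos h]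
    · simp only [if_neg h, if_neg (fun hk : k ∈ e => h (he hk))]
  rw [Finset.sum_congr rfl key,
    HALcomb.comb d (fun e => f (fun k => if k ∈ e then x k else 0))]
  have h1 : (fun k => if k ∈ (Finset.univ : Finset (Fin d)) then x k else 0) = x :=
    funext fun k => if_pos (Finset.mem_univ k)
  have h2 : (fun k => if k ∈ (∅ : Finset (Fin d)) then x k else 0) = (0 : Fin d → ℝ) :=
    funext fun k => if_neg (Finset.notMem_empty k)
  rw [h1, h2]
  ring

end HALpart1

namespace HALgrid
open HALaux HALcore MeasureTheory

theorem grid_mono {d : ℕ} {s : Finset (Fin d)} (G : HAL.SectionGrid d s) (k : Fin d) :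
    ∀ {i i' : ℕ}, i ≤ i' → i' ≤ G.L k → G.t k i ≤ G.t k i' := by
  intro i i' hii hiL
  induction i' with
  | zero =>
    have : i = 0 := Nat.le_zero.mp hii
    subst this; exact le_refl _
  | succ m ih =>
    by_cases h : i = m + 1
    · subst h; exact le_refl _
    · have h1 : i ≤ m := by omega
      have h2 : m < G.L k := by omega
      exact le_trans (ih h1 (le_of_lt h2)) (le_of_lt (G.tmono k m h2))

/-- The half-open box of the grid, inside the section cube. -/
def gridBox {d : ℕ} {s : Finset (Fin d)} (G : HAL.SectionGrid d s) (j : Fin d → ℕ) :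
    Set ↥(Set.Icc (0 : Fin s.card → ℝ) 1) :=
  {z | ∀ i, G.t ((s.orderIsoOfFin rfl) i) (j ((s.orderIsoOfFin rfl) i) - 1) <
        (z : Fin s.card → ℝ) i ∧
      (z : Fin s.card → ℝ) i ≤ G.t ((s.orderIsoOfFin rfl) i) (j ((s.orderIsoOfFin rfl) i))}

theorem measurable_cornerBox {n : ℕ} (lo hi : Fin n → ℝ) :
    MeasurableSet {z : ↥(Set.Icc (0 : Fin n → ℝ) 1) |
      ∀ i, lo i < (z : Fin n → ℝ) i ∧ (z : Fin n → ℝ) i ≤ hi i} := by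
  have h : {z : ↥(Set.Icc (0 : Fin n → ℝ) 1) |
      ∀ i, lo i < (z : Fin n → ℝ) i ∧ (z : Fin n → ℝ) i ≤ hi i} =
      ⋂ i, ({z : ↥(Set.Icc (0 : Fin n → ℝ) 1) | (z : Fin n → ℝ) i ≤ lo i}ᶜ ∩
        {z : ↥(Set.Icc (0 : Fin n → ℝ) 1) | (z : Fin n → ℝ) i ≤ hi i}) := by
    ext z
    simp only [Set.mem_setOf_eq, Set.mem_iInter, Set.mem_inter_iff, Set.mem_compl_iff, not_le]
  rw [h]
  exact MeasurableSet.iInter fun i =>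
    ((measurable_coord_le i (lo i)).compl.inter (measurable_coord_le i (hi i)))

theorem gridBox_measurable {d : ℕ} {s : Finset (Fin d)} (G : HAL.SectionGrid d s)
    (j : Fin d → ℕ) : MeasurableSet (gridBox G j) :=
  measurable_cornerBox _ _

theorem measurable_corner {n : ℕ} :
    MeasurableSet {z : ↥(Set.Icc (0 : Fin n → ℝ) 1) | ∀ i, 0 < (z : Fin n → ℝ) i} := by
  have h : {z : ↥(Set.Icc (0 : Fin n → ℝ) 1) | ∀ i, 0 < (z : Fin n → ℝ) i} =
      ⋂ i, {z : ↥(Set.Icc (0 : Fin n → ℝ) 1) | (z : Fin n → ℝ) i ≤ 0}ᶜ := by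
    ext z
    simp only [Set.mem_setOf_eq, Set.mem_iInter, Set.mem_compl_iff, not_le]
  rw [h]
  exact MeasurableSet.iInter fun i => (measurable_coord_le i 0).compl

theorem sm_biUnion {α : Type*} [MeasurableSpace α] (μ : MeasureTheory.SignedMeasure α)
    {ι : Type*} [DecidableEq ι] (A : Finset ι) (g : ι → Set α)
    (hg : ∀ j, MeasurableSet (g j)) :
    (∀ j ∈ A, ∀ j' ∈ A, j ≠ j' → Disjoint (g j) (g j')) →
    μ (⋃ j ∈ A, g j) = ∑ j ∈ A, μ (g j) := by
  induction A using Finset.induction with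
  | empty => intro _; simp
  | @insert a A ha ih =>
    intro hdisj
    rw [Finset.set_biUnion_insert, VectorMeasure.of_union ?_ (hg a)
      (A.measurableSet_biUnion (fun j _ => hg j)),
      Finset.sum_insert ha,
      ih (fun j hj j' hj' hne => hdisj j (Finset.mem_insert_of_mem hj) j'
        (Finset.mem_insert_of_mem hj') hne)]
    · rw [Set.disjoint_iUnion_right]
      intro j
      rw [Set.disjoint_iUnion_right]
      intro hj
      exact hdisj a (Finset.mem_insert_self a A) j (Finset.mem_insert_of_mem hj)
        (fun h => ha (h ▸ hj))

theorem boxQV_eq {d : ℕ} (f : (Fin d → ℝ) → ℝ) (s : Finset (Fin d))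
    (μ : MeasureTheory.SignedMeasure ↥(Set.Icc (0 : Fin s.card → ℝ) 1))
    (hμ : ∀ y ∈ Set.Icc (0 : Fin s.card → ℝ) 1,
      HAL.sectionFun d f s y =
        μ {z : ↥(Set.Icc (0 : Fin s.card → ℝ) 1) | (z : Fin s.card → ℝ) ≤ y})
    (G : HAL.SectionGrid d s) (j : Fin d → ℕ) (hj : ∀ k, 1 ≤ j k ∧ j k ≤ G.L k) :
    HAL.boxQuasiVolume f G j = μ (gridBox G j) := by
  have hmb := HALcore.muBox d f s μ hμ (fun k => G.t k (j k - 1)) (fun k => G.t k (j k))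
    (fun k _ => by
      have := G.t0 k
      calc (0:ℝ) = G.t k 0 := (G.t0 k).symm
      _ ≤ G.t k (j k - 1) := grid_mono G k (Nat.zero_le _) (by have := hj k; omega))
    (fun k _ => grid_mono G k (by omega) (hj k).2)
    (fun k _ => by
      calc G.t k (j k) ≤ G.t k (G.L k) := grid_mono G k (hj k).2 (le_refl _)
      _ = 1 := G.tlast k)
  rw [show gridBox G j = {z : ↥(Set.Icc (0 : Fin s.card → ℝ) 1) |
      ∀ i, (fun k => G.t k (j k - 1)) ((s.orderIsoOfFin rfl) i) < (z : Fin s.card → ℝ) i ∧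
        (z : Fin s.card → ℝ) i ≤ (fun k => G.t k (j k)) ((s.orderIsoOfFin rfl) i)} from rfl,
    hmb]
  rfl

end HALgrid


namespace HALsm
open MeasureTheory

theorem sm_apply_eq {α : Type*} [MeasurableSpace α] (μ : SignedMeasure α) {A : Set α}
    (hA : MeasurableSet A) :
    μ A = (μ.toJordanDecomposition.posPart A).toReal -
      (μ.toJordanDecomposition.negPart A).toReal := by
  conv_lhs => rw [← μ.toSignedMeasure_toJordanDecomposition]
  rw [JordanDecomposition.toSignedMeasure, Measure.toSignedMeasure_sub_apply hA]
  rfl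

theorem abs_sm_le_tv {α : Type*} [MeasurableSpace α] (μ : SignedMeasure α) {A : Set α}
    (hA : MeasurableSet A) :
    |μ A| ≤ (μ.totalVariation A).toReal := by
  rw [sm_apply_eq μ hA, SignedMeasure.totalVariation, Measure.add_apply,
    ENNReal.toReal_add (measure_ne_top _ _) (measure_ne_top _ _)]
  have h1 : (0:ℝ) ≤ (μ.toJordanDecomposition.posPart A).toReal := ENNReal.toReal_nonneg
  have h2 : (0:ℝ) ≤ (μ.toJordanDecomposition.negPart A).toReal := ENNReal.toReal_nonneg
  rw [abs_sub_le_iff]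
  constructor <;> linarith

instance tv_finite {α : Type*} [MeasurableSpace α] (μ : SignedMeasure α) :
    IsFiniteMeasure μ.totalVariation := by
  rw [SignedMeasure.totalVariation]
  infer_instance

end HALsm

namespace HALstepA
open MeasureTheory HALaux HALcore HALgrid HALsm

theorem box_subset_corner {d : ℕ} {s : Finset (Fin d)} (G : HAL.SectionGrid d s)
    (j : Fin d → ℕ) (hj : ∀ k, 1 ≤ j k ∧ j k ≤ G.L k) :
    gridBox G j ⊆ {z : ↥(Set.Icc (0 : Fin s.card → ℝ) 1) |
      ∀ i, 0 < (z : Fin s.card → ℝ) i} := by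
  intro z hz i
  have h := hz i
  calc (0:ℝ) = G.t ((s.orderIsoOfFin rfl) i) 0 := (G.t0 _).symm
  _ ≤ G.t ((s.orderIsoOfFin rfl) i) (j ((s.orderIsoOfFin rfl) i) - 1) :=
      grid_mono G _ (Nat.zero_le _) (by have := hj ((s.orderIsoOfFin rfl) i); omega)
  _ < (z : Fin s.card → ℝ) i := h.1

theorem box_disjoint {d : ℕ} {s : Finset (Fin d)} (G : HAL.SectionGrid d s)
    {j j' : Fin d → ℕ} (hj : ∀ k, 1 ≤ j k ∧ j k ≤ G.L k)
    (hj' : ∀ k, 1 ≤ j' k ∧ j' k ≤ G.L k) (hne : j ≠ j') :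
    Disjoint (gridBox G j) (gridBox G j') := by
  classical
  have hex : ∃ k, j k ≠ j' k := by
    by_contra h
    push_neg at h
    exact hne (funext h)
  obtain ⟨k, hk⟩ := hex
  have hks : k ∈ s := by
    by_contra hknot
    have h1 := G.Lout k hknot
    have h2 := hj k
    have h3 := hj' k
    omega
  set i := (s.orderIsoOfFin rfl).symm ⟨k, hks⟩ with hi
  have hco : (↑((s.orderIsoOfFin rfl) i) : Fin d) = k := by
    rw [hi, OrderIso.apply_symm_apply]
  rw [Set.disjoint_left]
  intro z hz hz'
  have h1 := hz i
  have h2 := hz' i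
  rw [hco] at h1 h2
  rcases lt_or_gt_of_ne hk with hlt | hgt
  · have : G.t k (j k) ≤ G.t k (j' k - 1) :=
      grid_mono G k (by omega) (by have := hj' k; omega)
    linarith [h1.2, h2.1]
  · have : G.t k (j' k) ≤ G.t k (j k - 1) :=
      grid_mono G k (by omega) (by have := hj k; omega)
    linarith [h1.1, h2.2]

theorem stepA {d : ℕ} (f : (Fin d → ℝ) → ℝ) (s : Finset (Fin d))
    (μ : MeasureTheory.SignedMeasure ↥(Set.Icc (0 : Fin s.card → ℝ) 1))
    (hμ : ∀ y ∈ Set.Icc (0 : Fin s.card → ℝ) 1,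
      HAL.sectionFun d f s y =
        μ {z : ↥(Set.Icc (0 : Fin s.card → ℝ) 1) | (z : Fin s.card → ℝ) ≤ y}) :
    HAL.sectionVitali d f s ≤
      μ.totalVariation {z : ↥(Set.Icc (0 : Fin s.card → ℝ) 1) |
        ∀ i, 0 < (z : Fin s.card → ℝ) i} := by
  classical
  rw [HAL.sectionVitali]
  apply iSup_le
  intro G
  have hjmem : ∀ j ∈ Fintype.piFinset (fun k => Finset.Icc 1 (G.L k)),
      ∀ k, 1 ≤ j k ∧ j k ≤ G.L k := by
    intro j hj k
    have := Fintype.mem_piFinset.1 hj k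
    rw [Finset.mem_Icc] at this
    exact this
  have h1 : HAL.gridVariationSum f G ≤ (μ.totalVariation
      {z : ↥(Set.Icc (0 : Fin s.card → ℝ) 1) | ∀ i, 0 < (z : Fin s.card → ℝ) i}).toReal := by
    rw [HAL.gridVariationSum]
    have hstep : ∀ j ∈ Fintype.piFinset (fun k => Finset.Icc 1 (G.L k)),
        |HAL.boxQuasiVolume f G j| ≤ (μ.totalVariation (gridBox G j)).toReal := by
      intro j hj
      rw [boxQV_eq f s μ hμ G j (hjmem j hj)]
      exact abs_sm_le_tv μ (gridBox_measurable G j)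
    calc ∑ j ∈ Fintype.piFinset (fun k => Finset.Icc 1 (G.L k)), |HAL.boxQuasiVolume f G j|
        ≤ ∑ j ∈ Fintype.piFinset (fun k => Finset.Icc 1 (G.L k)),
            (μ.totalVariation (gridBox G j)).toReal := Finset.sum_le_sum hstep
      _ = (∑ j ∈ Fintype.piFinset (fun k => Finset.Icc 1 (G.L k)),
            μ.totalVariation (gridBox G j)).toReal := by
          rw [ENNReal.toReal_sum]
          intro j _
          exact measure_ne_top _ _
      _ = (μ.totalVariation (⋃ j ∈ Fintype.piFinset (fun k => Finset.Icc 1 (G.L k)),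
            gridBox G j)).toReal := by
          rw [measure_biUnion_finset ?_ (fun j _ => gridBox_measurable G j)]
          intro j hj j' hj' hne
          exact box_disjoint G (hjmem j hj) (hjmem j' hj') hne
      _ ≤ (μ.totalVariation {z : ↥(Set.Icc (0 : Fin s.card → ℝ) 1) |
            ∀ i, 0 < (z : Fin s.card → ℝ) i}).toReal := by
          apply ENNReal.toReal_mono (measure_ne_top _ _)
          apply measure_mono
          apply Set.iUnion₂_subset
          intro j hj
          exact box_subset_corner G j (hjmem j hj)
  calc ENNReal.ofReal (HAL.gridVariationSum f G)
      ≤ ENNReal.ofReal ((μ.totalVariation {z : ↥(Set.Icc (0 : Fin s.card → ℝ) 1) |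
          ∀ i, 0 < (z : Fin s.card → ℝ) i}).toReal) := ENNReal.ofReal_le_ofReal h1
    _ = μ.totalVariation {z : ↥(Set.Icc (0 : Fin s.card → ℝ) 1) |
          ∀ i, 0 < (z : Fin s.card → ℝ) i} := ENNReal.ofReal_toReal (measure_ne_top _ _)

end HALstepA


namespace HALunif

noncomputable def unifGrid {d : ℕ} (s : Finset (Fin d)) (N : ℕ) (hN : 0 < N) :
    HAL.SectionGrid d s where
  L := fun k => if k ∈ s then N else 1
  t := fun k i => if k ∈ s then (i : ℝ) / N else (i : ℝ)
  Lpos := fun k => by by_cases h : k ∈ s <;> simp [h] <;> omega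
  Lout := fun k hk => by simp [hk]
  t0 := fun k => by by_cases h : k ∈ s <;> simp [h]
  tlast := fun k => by
    by_cases h : k ∈ s <;> simp [h]
    omega
  tmono := fun k i hi => by
    by_cases h : k ∈ s
    · simp only [if_pos h] at hi ⊢
      rw [div_lt_div_iff_of_pos_right (by exact_mod_cast hN : (0:ℝ) < (N:ℝ))]
      exact_mod_cast Nat.lt_succ_self i
    · simp only [if_neg h] at hi ⊢
      exact_mod_cast Nat.lt_succ_self i

theorem ceil_mem {N : ℕ} (hN : 0 < N) {x : ℝ} (hx0 : 0 < x) (hx1 : x ≤ 1) :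
    1 ≤ ⌈x * N⌉₊ ∧ ⌈x * N⌉₊ ≤ N ∧ ((⌈x * N⌉₊ - 1 : ℕ) : ℝ) / N < x ∧
      x ≤ (⌈x * N⌉₊ : ℝ) / N := by
  have hNR : (0:ℝ) < N := by exact_mod_cast hN
  have h1 : 0 < ⌈x * N⌉₊ := Nat.ceil_pos.2 (mul_pos hx0 hNR)
  have h2 : ⌈x * N⌉₊ ≤ N := by
    rw [Nat.ceil_le]
    calc x * N ≤ 1 * N := mul_le_mul_of_nonneg_right hx1 hNR.le
    _ = (N : ℝ) := one_mul _
  have h3 : x ≤ (⌈x * N⌉₊ : ℝ) / N := (le_div_iff₀ hNR).2 (Nat.le_ceil _)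
  have h4 : ((⌈x * N⌉₊ - 1 : ℕ) : ℝ) / N < x := by
    rw [div_lt_iff₀ hNR, Nat.cast_sub h1, Nat.cast_one]
    have := Nat.ceil_lt_add_one (mul_pos hx0 hNR).le (R := ℝ) (a := x * N)
    linarith
  exact ⟨h1, h2, h4, h3⟩

theorem corner_cover {d : ℕ} (s : Finset (Fin d)) (N : ℕ) (hN : 0 < N)
    (z : ↥(Set.Icc (0 : Fin s.card → ℝ) 1)) (hz : ∀ i, 0 < (z : Fin s.card → ℝ) i) :
    ∃ j ∈ Fintype.piFinset (fun k => Finset.Icc 1 ((unifGrid s N hN).L k)),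
      z ∈ HALgrid.gridBox (unifGrid s N hN) j := by
  classical
  have hle1 : ∀ i, (z : Fin s.card → ℝ) i ≤ 1 := fun i => z.2.2 i
  refine ⟨fun k => if h : k ∈ s then
      ⌈(z : Fin s.card → ℝ) ((s.orderIsoOfFin rfl).symm ⟨k, h⟩) * N⌉₊ else 1, ?_, ?_⟩
  · rw [Fintype.mem_piFinset]
    intro k
    rw [Finset.mem_Icc]
    by_cases h : k ∈ s
    · simp only [dif_pos h]
      have hc := ceil_mem hN (hz ((s.orderIsoOfFin rfl).symm ⟨k, h⟩))
        (hle1 ((s.orderIsoOfFin rfl).symm ⟨k, h⟩))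
      refine ⟨hc.1, ?_⟩
      show _ ≤ (unifGrid s N hN).L k
      rw [show (unifGrid s N hN).L k = N from if_pos h]
      exact hc.2.1
    · simp only [dif_neg h]
      constructor
      · exact le_refl 1
      · show 1 ≤ (unifGrid s N hN).L k
        rw [show (unifGrid s N hN).L k = 1 from if_neg h]
  · intro i
    have hk : (↑((s.orderIsoOfFin rfl) i) : Fin d) ∈ s := ((s.orderIsoOfFin rfl) i).2
    have hsy : (s.orderIsoOfFin rfl).symm ⟨↑((s.orderIsoOfFin rfl) i), hk⟩ = i := by
      rw [show (⟨↑((s.orderIsoOfFin rfl) i), hk⟩ : {x // x ∈ s}) = (s.orderIsoOfFin rfl) i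
        from Subtype.ext rfl, OrderIso.symm_apply_apply]
    have hc := ceil_mem hN (hz i) (hle1 i)
    simp only [dif_pos hk, hsy]
    constructor
    · show (unifGrid s N hN).t _ _ < _
      rw [show ∀ m, (unifGrid s N hN).t (↑((s.orderIsoOfFin rfl) i)) m = (m : ℝ) / N
        from fun m => if_pos hk]
      exact hc.2.2.1
    · show _ ≤ (unifGrid s N hN).t _ _
      rw [show ∀ m, (unifGrid s N hN).t (↑((s.orderIsoOfFin rfl) i)) m = (m : ℝ) / N
        from fun m => if_pos hk]
      exact hc.2.2.2

theorem box_dist {d : ℕ} {s : Finset (Fin d)} {N : ℕ} (hN : 0 < N) {j : Fin d → ℕ}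
    (hj : ∀ k, 1 ≤ j k) {z w : ↥(Set.Icc (0 : Fin s.card → ℝ) 1)}
    (hz : z ∈ HALgrid.gridBox (unifGrid s N hN) j)
    (hw : w ∈ HALgrid.gridBox (unifGrid s N hN) j)
    {δ : ℝ} (hδ : 1 / N < δ) : dist z w < δ := by
  have hNR : (0:ℝ) < N := by exact_mod_cast hN
  have hδ0 : 0 < δ := lt_of_le_of_lt (by positivity) hδ
  rw [Subtype.dist_eq, dist_pi_lt_iff hδ0]
  intro i
  have hk : (↑((s.orderIsoOfFin rfl) i) : Fin d) ∈ s := ((s.orderIsoOfFin rfl) i).2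
  set k := (↑((s.orderIsoOfFin rfl) i) : Fin d)
  have h1 := hz i
  have h2 := hw i
  simp (config := {zetaDelta := true}) only [show ∀ m, (unifGrid s N hN).t k m = (m : ℝ) / N from fun m => if_pos hk] at h1 h2
  have hcast : ((j k - 1 : ℕ) : ℝ) = (j k : ℝ) - 1 := by
    rw [Nat.cast_sub (hj k), Nat.cast_one]
  rw [hcast] at h1 h2
  rw [Real.dist_eq, abs_sub_lt_iff]
  have hd : (j k : ℝ) / N - ((j k : ℝ) - 1) / N = 1 / N := by field_simp; ring
  constructor
  · have := h1.2
    have := h2.1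
    calc (z : Fin s.card → ℝ) i - (w : Fin s.card → ℝ) i
        < (j k : ℝ) / N - ((j k : ℝ) - 1) / N := by linarith
    _ = 1 / N := hd
    _ < δ := hδ
  · have := h2.2
    have := h1.1
    calc (w : Fin s.card → ℝ) i - (z : Fin s.card → ℝ) i
        < (j k : ℝ) / N - ((j k : ℝ) - 1) / N := by linarith
    _ = 1 / N := hd
    _ < δ := hδ

end HALunif


namespace HALstepB
open MeasureTheory HALaux HALcore HALgrid HALsm HALstepA HALunif

theorem stepB_real {d : ℕ} (f : (Fin d → ℝ) → ℝ) (s : Finset (Fin d))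
    (μ : MeasureTheory.SignedMeasure ↥(Set.Icc (0 : Fin s.card → ℝ) 1))
    (hμ : ∀ y ∈ Set.Icc (0 : Fin s.card → ℝ) 1,
      HAL.sectionFun d f s y =
        μ {z : ↥(Set.Icc (0 : Fin s.card → ℝ) 1) | (z : Fin s.card → ℝ) ≤ y})
    {ε : ℝ} (hε : 0 < ε) :
    ∃ G : HAL.SectionGrid d s,
      (μ.totalVariation {z : ↥(Set.Icc (0 : Fin s.card → ℝ) 1) |
        ∀ i, 0 < (z : Fin s.card → ℝ) i}).toReal - ε ≤ HAL.gridVariationSum f G := by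
  classical
  haveI : CompactSpace ↥(Set.Icc (0 : Fin s.card → ℝ) 1) :=
    isCompact_iff_compactSpace.mp isCompact_Icc
  set νp := μ.toJordanDecomposition.posPart with hνp
  set νn := μ.toJordanDecomposition.negPart with hνn
  set corner : Set ↥(Set.Icc (0 : Fin s.card → ℝ) 1) :=
    {z | ∀ i, 0 < (z : Fin s.card → ℝ) i} with hcorner
  have hCm : MeasurableSet corner := measurable_corner
  obtain ⟨S, hSm, hS1, hS2⟩ := μ.toJordanDecomposition.mutuallySingular
  set Ap := corner ∩ Sᶜ with hAp
  set An := corner ∩ S with hAn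
  have hApm : MeasurableSet Ap := hCm.inter hSm.compl
  have hAnm : MeasurableSet An := hCm.inter hSm
  set εE := ENNReal.ofReal (ε/4) with hεE
  have hεE0 : εE ≠ 0 := by
    rw [hεE, Ne, ENNReal.ofReal_eq_zero, not_le]
    linarith
  obtain ⟨Kp, hKpsub, hKpc, hKp⟩ :=
    hApm.exists_isCompact_lt_add (μ := νp) (measure_ne_top _ _) hεE0
  obtain ⟨Kn, hKnsub, hKnc, hKn⟩ :=
    hAnm.exists_isCompact_lt_add (μ := νn) (measure_ne_top _ _) hεE0
  have hdisjK : Disjoint Kp Kn := by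
    rw [Set.disjoint_left]
    intro z hzp hzn
    exact (hKpsub hzp).2 (hKnsub hzn).2
  obtain ⟨δ, hδ0, hth⟩ := hdisjK.exists_thickenings hKpc hKnc.isClosed
  obtain ⟨N0, hN0⟩ := exists_nat_one_div_lt hδ0
  set N := N0 + 1 with hNdef
  have hN : 0 < N := Nat.succ_pos _
  have hNδ : 1 / (N : ℝ) < δ := by
    rw [hNdef]
    push_cast
    exact hN0
  set G := unifGrid s N hN with hG
  set pf := Fintype.piFinset (fun k => Finset.Icc 1 (G.L k)) with hpf
  have hjmem : ∀ j ∈ pf, ∀ k, 1 ≤ j k ∧ j k ≤ G.L k := by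
    intro j hj k
    have := Fintype.mem_piFinset.1 hj k
    rwa [Finset.mem_Icc] at this
  set Pp := pf.filter (fun j => (gridBox G j ∩ Kp).Nonempty) with hPp
  set Pn := pf.filter (fun j => (gridBox G j ∩ Kn).Nonempty) with hPn
  have hboxth : ∀ K : Set ↥(Set.Icc (0 : Fin s.card → ℝ) 1), ∀ j ∈ pf,
      (gridBox G j ∩ K).Nonempty → gridBox G j ⊆ Metric.thickening δ K := by
    rintro K j hj ⟨w, hw1, hw2⟩ z hz
    rw [Metric.mem_thickening_iff]
    exact ⟨w, hw2, box_dist hN (fun k => (hjmem j hj k).1) hz hw1 hNδ⟩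
  have hPpKn : ∀ j ∈ Pp, Disjoint (gridBox G j) Kn := by
    intro j hj
    rw [hPp, Finset.mem_filter] at hj
    exact hth.mono (hboxth Kp j hj.1 hj.2) (Metric.self_subset_thickening hδ0 Kn)
  have hPnKp : ∀ j ∈ Pn, Disjoint (gridBox G j) Kp := by
    intro j hj
    rw [hPn, Finset.mem_filter] at hj
    exact (hth.symm).mono (hboxth Kn j hj.1 hj.2) (Metric.self_subset_thickening hδ0 Kp)
  have hPpPn : Disjoint Pp Pn := by
    rw [Finset.disjoint_left]
    intro j hjp hjn
    rw [hPn, Finset.mem_filter] at hjn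
    obtain ⟨w, hw1, hw2⟩ := hjn.2
    exact Set.disjoint_left.1 (hPpKn j hjp) hw1 hw2
  set Up := ⋃ j ∈ Pp, gridBox G j with hUp
  set Un := ⋃ j ∈ Pn, gridBox G j with hUn
  have hUpm : MeasurableSet Up := Pp.measurableSet_biUnion (fun j _ => gridBox_measurable G j)
  have hUnm : MeasurableSet Un := Pn.measurableSet_biUnion (fun j _ => gridBox_measurable G j)
  have hUp_corner : Up ⊆ corner := by
    rw [hUp]
    apply Set.iUnion₂_subset
    intro j hj
    exact box_subset_corner G j (hjmem j (Finset.mem_of_mem_filter j hj))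
  have hUn_corner : Un ⊆ corner := by
    rw [hUn]
    apply Set.iUnion₂_subset
    intro j hj
    exact box_subset_corner G j (hjmem j (Finset.mem_of_mem_filter j hj))
  have hUpKn : Disjoint Up Kn := by
    rw [hUp, Set.disjoint_iUnion_left]
    intro j
    rw [Set.disjoint_iUnion_left]
    exact fun hj => hPpKn j hj
  have hUnKp : Disjoint Un Kp := by
    rw [hUn, Set.disjoint_iUnion_left]
    intro j
    rw [Set.disjoint_iUnion_left]
    exact fun hj => hPnKp j hj
  have hKpUp : Kp ⊆ Up := by
    intro z hz
    have hzc : z ∈ corner := (hKpsub hz).1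
    obtain ⟨j, hj, hzj⟩ := corner_cover s N hN z hzc
    rw [hUp]
    have hjP : j ∈ Pp := by
      rw [hPp]
      exact Finset.mem_filter.2 ⟨hj, ⟨z, hzj, hz⟩⟩
    exact Set.mem_biUnion hjP hzj
  have hKnUn : Kn ⊆ Un := by
    intro z hz
    have hzc : z ∈ corner := (hKnsub hz).1
    obtain ⟨j, hj, hzj⟩ := corner_cover s N hN z hzc
    rw [hUn]
    have hjP : j ∈ Pn := by
      rw [hPn]
      exact Finset.mem_filter.2 ⟨hj, ⟨z, hzj, hz⟩⟩
    exact Set.mem_biUnion hjP hzj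
  -- measure bounds
  have hsub_gen : ∀ U : Set ↥(Set.Icc (0 : Fin s.card → ℝ) 1), U ⊆ corner → Disjoint U Kn →
      U ⊆ Ap ∪ (An \ Kn) := by
    intro U hU hdis z hz
    by_cases hzS : z ∈ S
    · right
      exact ⟨⟨hU hz, hzS⟩, Set.disjoint_left.1 hdis hz⟩
    · left
      exact ⟨hU hz, hzS⟩
  have hsub_gen' : ∀ U : Set ↥(Set.Icc (0 : Fin s.card → ℝ) 1), U ⊆ corner → Disjoint U Kp →
      U ⊆ An ∪ (Ap \ Kp) := by
    intro U hU hdis z hz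
    by_cases hzS : z ∈ S
    · left
      exact ⟨hU hz, hzS⟩
    · right
      exact ⟨⟨hU hz, hzS⟩, Set.disjoint_left.1 hdis hz⟩
  have hνnUp : νn Up ≤ εE := by
    calc νn Up ≤ νn (Ap ∪ (An \ Kn)) := measure_mono (hsub_gen Up hUp_corner hUpKn)
    _ ≤ νn Ap + νn (An \ Kn) := measure_union_le _ _
    _ ≤ 0 + εE := by
        apply add_le_add
        · calc νn Ap ≤ νn Sᶜ := measure_mono Set.inter_subset_right
          _ = 0 := hS2
        · rw [measure_diff hKnsub hKnc.isClosed.measurableSet.nullMeasurableSet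
            (measure_ne_top _ _)]
          rw [tsub_le_iff_right]
          calc νn An ≤ νn Kn + εE := le_of_lt hKn
          _ = εE + νn Kn := add_comm _ _
    _ = εE := zero_add _
  have hνpUn : νp Un ≤ εE := by
    calc νp Un ≤ νp (An ∪ (Ap \ Kp)) := measure_mono (hsub_gen' Un hUn_corner hUnKp)
    _ ≤ νp An + νp (Ap \ Kp) := measure_union_le _ _
    _ ≤ 0 + εE := by
        apply add_le_add
        · calc νp An ≤ νp S := measure_mono Set.inter_subset_right
          _ = 0 := hS1
        · rw [measure_diff hKpsub hKpc.isClosed.measurableSet.nullMeasurableSet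
            (measure_ne_top _ _)]
          rw [tsub_le_iff_right]
          calc νp Ap ≤ νp Kp + εE := le_of_lt hKp
          _ = εE + νp Kp := add_comm _ _
    _ = εE := zero_add _
  have hcorner_split : corner = Ap ∪ An := by
    rw [hAp, hAn]
    ext z
    by_cases hzS : z ∈ S <;> simp [hzS]
  have hνpAp : νp corner ≤ νp Ap := by
    calc νp corner = νp (Ap ∪ An) := by rw [hcorner_split]
    _ ≤ νp Ap + νp An := measure_union_le _ _
    _ ≤ νp Ap + νp S := add_le_add (le_refl _) (measure_mono Set.inter_subset_right)
    _ = νp Ap := by rw [hS1, add_zero]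
  have hνnAn : νn corner ≤ νn An := by
    calc νn corner = νn (Ap ∪ An) := by rw [hcorner_split]
    _ ≤ νn Ap + νn An := measure_union_le _ _
    _ ≤ νn Sᶜ + νn An := add_le_add (measure_mono Set.inter_subset_right) (le_refl _)
    _ = νn An := by rw [hS2, zero_add]
  -- real computations
  have hε4 : (εE).toReal = ε/4 := ENNReal.toReal_ofReal (by linarith)
  have hμUp : (νp corner).toReal - ε/2 ≤ μ Up := by
    rw [sm_apply_eq μ hUpm]
    have h1 : (νp Kp).toReal ≤ (νp Up).toReal :=
      ENNReal.toReal_mono (measure_ne_top _ _) (measure_mono hKpUp)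
    have h2 : (νn Up).toReal ≤ ε/4 := by
      rw [← hε4]
      exact ENNReal.toReal_mono (by rw [hεE]; exact ENNReal.ofReal_ne_top) hνnUp
    have h3 : (νp corner).toReal ≤ (νp Kp).toReal + ε/4 := by
      have := ENNReal.toReal_mono (by finiteness : νp Kp + εE ≠ ⊤)
        (le_of_lt (lt_of_le_of_lt (le_of_le_of_eq hνpAp rfl) hKp))
      rwa [ENNReal.toReal_add (measure_ne_top _ _) (by rw [hεE]; exact ENNReal.ofReal_ne_top),
        hε4] at this
    linarith
  have hμUn : μ Un ≤ -((νn corner).toReal - ε/2) := by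
    rw [sm_apply_eq μ hUnm]
    have h1 : (νn Kn).toReal ≤ (νn Un).toReal :=
      ENNReal.toReal_mono (measure_ne_top _ _) (measure_mono hKnUn)
    have h2 : (νp Un).toReal ≤ ε/4 := by
      rw [← hε4]
      exact ENNReal.toReal_mono (by rw [hεE]; exact ENNReal.ofReal_ne_top) hνpUn
    have h3 : (νn corner).toReal ≤ (νn Kn).toReal + ε/4 := by
      have := ENNReal.toReal_mono (by finiteness : νn Kn + εE ≠ ⊤)
        (le_of_lt (lt_of_le_of_lt (le_of_le_of_eq hνnAn rfl) hKn))
      rwa [ENNReal.toReal_add (measure_ne_top _ _) (by rw [hεE]; exact ENNReal.ofReal_ne_top),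
        hε4] at this
    linarith
  -- sums over boxes
  have hμUpsum : μ Up = ∑ j ∈ Pp, μ (gridBox G j) :=
    sm_biUnion μ Pp _ (fun j => gridBox_measurable G j)
      (fun j hj j' hj' hne => box_disjoint G
        (hjmem j (Finset.mem_of_mem_filter j hj))
        (hjmem j' (Finset.mem_of_mem_filter j' hj')) hne)
  have hμUnsum : μ Un = ∑ j ∈ Pn, μ (gridBox G j) :=
    sm_biUnion μ Pn _ (fun j => gridBox_measurable G j)
      (fun j hj j' hj' hne => box_disjoint G
        (hjmem j (Finset.mem_of_mem_filter j hj))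
        (hjmem j' (Finset.mem_of_mem_filter j' hj')) hne)
  have habs1 : (νp corner).toReal - ε/2 ≤ ∑ j ∈ Pp, |μ (gridBox G j)| := by
    calc (νp corner).toReal - ε/2 ≤ μ Up := hμUp
    _ = ∑ j ∈ Pp, μ (gridBox G j) := hμUpsum
    _ ≤ |∑ j ∈ Pp, μ (gridBox G j)| := le_abs_self _
    _ ≤ ∑ j ∈ Pp, |μ (gridBox G j)| := Finset.abs_sum_le_sum_abs _ _
  have habs2 : (νn corner).toReal - ε/2 ≤ ∑ j ∈ Pn, |μ (gridBox G j)| := by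
    have h0 : -(∑ j ∈ Pn, μ (gridBox G j)) ≤ |∑ j ∈ Pn, μ (gridBox G j)| := neg_le_abs _
    calc (νn corner).toReal - ε/2 ≤ -μ Un := by linarith [hμUn]
    _ = -(∑ j ∈ Pn, μ (gridBox G j)) := by rw [hμUnsum]
    _ ≤ |∑ j ∈ Pn, μ (gridBox G j)| := h0
    _ ≤ ∑ j ∈ Pn, |μ (gridBox G j)| := Finset.abs_sum_le_sum_abs _ _
  refine ⟨G, ?_⟩
  have hgvs : HAL.gridVariationSum f G = ∑ j ∈ pf, |μ (gridBox G j)| := by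
    rw [HAL.gridVariationSum]
    apply Finset.sum_congr rfl
    intro j hj
    rw [boxQV_eq f s μ hμ G j (hjmem j hj)]
  have hsplit : ∑ j ∈ Pp, |μ (gridBox G j)| + ∑ j ∈ Pn, |μ (gridBox G j)|
      ≤ ∑ j ∈ pf, |μ (gridBox G j)| := by
    rw [← Finset.sum_union hPpPn]
    apply Finset.sum_le_sum_of_subset_of_nonneg
    · apply Finset.union_subset <;> exact Finset.filter_subset _ _
    · intro j _ _
      exact abs_nonneg _
  have htv : (μ.totalVariation corner).toReal =
      (νp corner).toReal + (νn corner).toReal := by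
    rw [SignedMeasure.totalVariation, Measure.add_apply,
      ENNReal.toReal_add (measure_ne_top _ _) (measure_ne_top _ _)]
  rw [hgvs, htv]
  linarith

theorem stepB {d : ℕ} (f : (Fin d → ℝ) → ℝ) (s : Finset (Fin d))
    (μ : MeasureTheory.SignedMeasure ↥(Set.Icc (0 : Fin s.card → ℝ) 1))
    (hμ : ∀ y ∈ Set.Icc (0 : Fin s.card → ℝ) 1,
      HAL.sectionFun d f s y =
        μ {z : ↥(Set.Icc (0 : Fin s.card → ℝ) 1) | (z : Fin s.card → ℝ) ≤ y}) :
    μ.totalVariation {z : ↥(Set.Icc (0 : Fin s.card → ℝ) 1) |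
        ∀ i, 0 < (z : Fin s.card → ℝ) i} ≤ HAL.sectionVitali d f s := by
  apply ENNReal.le_of_forall_pos_le_add
  intro ε hε _
  obtain ⟨G, hG⟩ := stepB_real f s μ hμ (ε := (ε : ℝ)) (by exact_mod_cast hε)
  set T := (μ.totalVariation {z : ↥(Set.Icc (0 : Fin s.card → ℝ) 1) |
      ∀ i, 0 < (z : Fin s.card → ℝ) i}).toReal with hT
  have h0 : μ.totalVariation {z : ↥(Set.Icc (0 : Fin s.card → ℝ) 1) |
      ∀ i, 0 < (z : Fin s.card → ℝ) i} = ENNReal.ofReal T :=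
    (ENNReal.ofReal_toReal (measure_ne_top _ _)).symm
  rw [h0]
  calc ENNReal.ofReal T ≤ ENNReal.ofReal ((T - ε) + ε) := by
        rw [sub_add_cancel]
    _ ≤ ENNReal.ofReal (T - ε) + ENNReal.ofReal ε := ENNReal.ofReal_add_le
    _ ≤ HAL.sectionVitali d f s + ε := by
        apply add_le_add
        · calc ENNReal.ofReal (T - ε) ≤ ENNReal.ofReal (HAL.gridVariationSum f G) :=
            ENNReal.ofReal_le_ofReal hG
          _ ≤ HAL.sectionVitali d f s := le_iSup (fun G => ENNReal.ofReal
              (HAL.gridVariationSum f G)) G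
        · rw [ENNReal.ofReal_coe_nnreal]

end HALstepB


/-- the representation `f(x) = f(0) + ∑_s μ_{f_s}((0_s, x_s])` and
`‖f‖_v = |f(0)| + ∑_s |μ_{f_s}|((0_s, 1_s])`. -/
theorem cadlag_representation
    (d : ℕ) (hd : 1 ≤ d) (M : ℝ) (hM : 0 < M)
    (f : (Fin d → ℝ) → ℝ) (hf : f ∈ HAL.Dset d M)
    (μ : (s : Finset (Fin d)) →
      MeasureTheory.SignedMeasure ↥(Set.Icc (0 : Fin s.card → ℝ) 1))
    (hμ : ∀ s : Finset (Fin d), s.Nonempty → ∀ y ∈ Set.Icc (0 : Fin s.card → ℝ) 1,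
      HAL.sectionFun d f s y =
        μ s {z : ↥(Set.Icc (0 : Fin s.card → ℝ) 1) | (z : Fin s.card → ℝ) ≤ y}) :
    (∀ x ∈ Set.Icc (0 : Fin d → ℝ) 1,
      f x = f 0 + ∑ s ∈ (Finset.univ : Finset (Fin d)).powerset.erase ∅,
        μ s {z : ↥(Set.Icc (0 : Fin s.card → ℝ) 1) |
          ∀ i, 0 < (z : Fin s.card → ℝ) i ∧
            (z : Fin s.card → ℝ) i ≤ HAL.subvector d x s i}) ∧
    HAL.svn d f = ENNReal.ofReal |f 0| +
      ∑ s ∈ (Finset.univ : Finset (Fin d)).powerset.erase ∅,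
        (μ s).totalVariation
          {z : ↥(Set.Icc (0 : Fin s.card → ℝ) 1) | ∀ i, 0 < (z : Fin s.card → ℝ) i} := by
  constructor
  · intro x hx
    exact HALpart1.part1 d f μ hμ x hx
  · rw [HAL.svn]
    congr 1
    apply Finset.sum_congr rfl
    intro s hs
    have hsne : s.Nonempty :=
      Finset.nonempty_of_ne_empty (Finset.ne_of_mem_erase hs)
    exact le_antisymm (HALstepA.stepA f s (μ s) (hμ s hsne))
      (HALstepB.stepB f s (μ s) (hμ s hsne))
end
end

section
/- Fix an integer d ≥ 1. Let K ⊂ ℝ be a finite set and let f : [0,1]^d → K. If f is not a finite linear combination of indicator functions of upper boxes, i.e., f ∉ span(F^d) where F^d = {1_{[x,1]} : x ∈ [0,1]^d}, then f is not càdlàg. -/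
open MeasureTheory Filter Set
open scoped ENNReal NNReal

noncomputable section

section AuxHAL

open Metric

variable {d : ℕ}

lemma HALaux.quadrant_subset (a : Fin d → Bool) {u : Fin d → ℝ}
    (hu : u ∈ Set.Icc (0 : Fin d → ℝ) 1) :
    HAL.quadrant d a u ⊆ Set.Icc (0 : Fin d → ℝ) 1 := by
  intro y hy
  have hy' : ∀ k, if a k then u k ≤ y k ∧ y k ≤ 1 else 0 ≤ y k ∧ y k < u k := hy
  refine ⟨fun k => ?_, fun k => ?_⟩
  · have h := hy' k
    by_cases hk : a k = true
    · simp only [hk, if_true] at h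
      have h0 : (0:ℝ) ≤ u k := hu.1 k
      simpa using le_trans h0 h.1
    · simp only [hk, if_false] at h
      simpa using h.1
  · have h := hy' k
    by_cases hk : a k = true
    · simp only [hk, if_true] at h
      simpa using h.2
    · simp only [hk, if_false] at h
      have h1 : u k ≤ 1 := hu.2 k
      simpa using le_of_lt (lt_of_lt_of_le h.2 h1)

lemma HALaux.eventually_eq_limit {K : Set ℝ} (hK : K.Finite) {g : ℕ → ℝ} {L : ℝ}
    (hg : ∀ n, g n ∈ K) (hL : Filter.Tendsto g Filter.atTop (nhds L)) :
    ∀ᶠ n in Filter.atTop, g n = L := by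
  have hfin : ∀ v : ℝ, v ≠ L → {n | g n = v}.Finite := by
    intro v hv
    by_contra h
    have hfreq : ∃ᶠ n in Filter.atTop, g n ∈ ({v} : Set ℝ) := by
      rw [Nat.frequently_atTop_iff_infinite]
      exact h
    have hcl := mem_closure_of_frequently_of_tendsto hfreq hL
    rw [closure_singleton, Set.mem_singleton_iff] at hcl
    exact hv hcl.symm
  have h2 : {n | g n ≠ L}.Finite := by
    have hsub : {n | g n ≠ L} ⊆ ⋃ v ∈ (K \ {L} : Set ℝ), {n | g n = v} := by
      intro n hn
      exact Set.mem_biUnion ⟨hg n, hn⟩ rfl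
    exact Set.Finite.subset
      (Set.Finite.biUnion (hK.sdiff) (fun v hv => hfin v (by simpa using hv.2))) hsub
  have h3 := h2.eventually_cofinite_notMem
  rw [Nat.cofinite_eq_atTop] at h3
  filter_upwards [h3] with n hn
  simpa using hn

lemma HALaux.local_quadrant_const {K : Set ℝ} (hK : K.Finite)
    {f : (Fin d → ℝ) → ℝ} (hfK : ∀ x ∈ Set.Icc (0 : Fin d → ℝ) 1, f x ∈ K)
    (hc : HAL.IsCadlag d f) {u : Fin d → ℝ} (hu : u ∈ Set.Icc (0 : Fin d → ℝ) 1)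
    (a : Fin d → Bool) :
    ∃ δ > 0, ∀ y ∈ HAL.quadrant d a u, ∀ z ∈ HAL.quadrant d a u,
      dist y u < δ → dist z u < δ → f y = f z := by
  by_contra h
  push_neg at h
  have h' : ∀ n : ℕ, ∃ y ∈ HAL.quadrant d a u, ∃ z ∈ HAL.quadrant d a u,
      dist y u < 1/((n:ℝ)+1) ∧ dist z u < 1/((n:ℝ)+1) ∧ f y ≠ f z := by
    intro n
    obtain ⟨y, hy, z, hz, h1, h2, h3⟩ := h (1/((n:ℝ)+1)) (by positivity)
    exact ⟨y, hy, z, hz, h1, h2, h3⟩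
  choose Y hY Z hZ hdY hdZ hne using h'
  set x : ℕ → (Fin d → ℝ) := fun n => if Even n then Y (n/2) else Z (n/2) with hx
  have hxQ : ∀ n, x n ∈ HAL.quadrant d a u := by
    intro n
    by_cases hn : Even n <;> simp only [hx, hn, if_true, if_false] <;>
      first | exact hY _ | exact hZ _
  have hdist : ∀ n, dist (x n) u < 1/(((n/2 : ℕ) : ℝ)+1) := by
    intro n
    by_cases hn : Even n <;> simp only [hx, hn, if_true, if_false] <;>
      first | exact hdY _ | exact hdZ _
  have hxu : Filter.Tendsto x Filter.atTop (nhds u) := by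
    rw [tendsto_iff_dist_tendsto_zero]
    apply squeeze_zero (fun n => dist_nonneg) (fun n => le_of_lt (hdist n))
    have h1 : Filter.Tendsto (fun n : ℕ => n/2) Filter.atTop Filter.atTop :=
      Filter.tendsto_atTop_atTop.2 fun b => ⟨2*b, fun n hn =>
        (Nat.le_div_iff_mul_le two_pos).2 (by omega)⟩
    exact tendsto_one_div_add_atTop_nhds_zero_nat.comp h1
  obtain ⟨L, hL, -⟩ := hc u hu a x hxQ hxu
  have hev := HALaux.eventually_eq_limit hK
    (fun n => hfK _ (HALaux.quadrant_subset a hu (hxQ n))) hL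
  obtain ⟨N, hN⟩ := Filter.eventually_atTop.1 hev
  have e1 : f (x (2*N)) = L := hN _ (by omega)
  have e2 : f (x (2*N+1)) = L := hN _ (by omega)
  have hx1 : x (2*N) = Y N := by
    have he : Even (2*N) := even_two_mul N
    have hq : (2*N)/2 = N := by omega
    simp [hx, he, hq]
  have hx2 : x (2*N+1) = Z N := by
    have he : ¬ Even (2*N+1) := by
      simp [Nat.even_add_one, even_two_mul]
    have hq : (2*N+1)/2 = N := by omega
    simp [hx, he, hq]
  apply hne N
  rw [← hx1, ← hx2, e1, e2]

lemma HALaux.pattern_const {K : Set ℝ} (hK : K.Finite)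
    {f : (Fin d → ℝ) → ℝ} (hfK : ∀ x ∈ Set.Icc (0 : Fin d → ℝ) 1, f x ∈ K)
    (hc : HAL.IsCadlag d f) {u : Fin d → ℝ} (hu : u ∈ Set.Icc (0 : Fin d → ℝ) 1) :
    ∃ δ > 0, ∀ y ∈ Set.Icc (0 : Fin d → ℝ) 1, ∀ z ∈ Set.Icc (0 : Fin d → ℝ) 1,
      dist y u < δ → dist z u < δ → (∀ k, u k ≤ y k ↔ u k ≤ z k) → f y = f z := by
  have h := fun a : Fin d → Bool => HALaux.local_quadrant_const hK hfK hc hu a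
  choose δ hδpos hδ using h
  refine ⟨Finset.univ.inf' Finset.univ_nonempty δ, ?_, ?_⟩
  · rw [gt_iff_lt, Finset.lt_inf'_iff]
    exact fun a _ => hδpos a
  · intro y hy z hz hdy hdz hpat
    classical
    set a : Fin d → Bool := fun k => decide (u k ≤ y k) with ha'
    have ha : ∀ k, a k = decide (u k ≤ y k) := fun _ => rfl
    have hpatQ : ∀ w : Fin d → ℝ, w ∈ Set.Icc (0 : Fin d → ℝ) 1 →
        (∀ k, u k ≤ w k ↔ u k ≤ y k) → w ∈ HAL.quadrant d a u := by
      intro w hw hp k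
      by_cases hk : a k = true
      · rw [if_pos hk]
        have huy : u k ≤ y k := of_decide_eq_true ((ha k) ▸ hk)
        exact ⟨(hp k).2 huy, by simpa using hw.2 k⟩
      · rw [if_neg hk]
        have huy : ¬ u k ≤ y k := fun hle => hk ((ha k).trans (decide_eq_true hle))
        exact ⟨by simpa using hw.1 k,
          lt_of_not_ge (fun hle => huy ((hp k).1 hle))⟩
    have hay : y ∈ HAL.quadrant d a u := hpatQ y hy (fun k => Iff.rfl)
    have haz : z ∈ HAL.quadrant d a u := hpatQ z hz (fun k => (hpat k).symm)
    exact hδ a y hay z haz (lt_of_lt_of_le hdy (Finset.inf'_le δ (Finset.mem_univ a)))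
      (lt_of_lt_of_le hdz (Finset.inf'_le δ (Finset.mem_univ a)))

open Classical in
lemma HALaux.exists_inversion {ι : Type} [Fintype ι] [PartialOrder ι] (v : ι → ℝ) :
    ∃ α : ι → ℝ, ∀ w : ι, (∑ c : ι, if c ≤ w then α c else 0) = v w := by
  classical
  let Φ : (ι → ℝ) →ₗ[ℝ] (ι → ℝ) :=
    { toFun := fun α w => ∑ c : ι, if c ≤ w then α c else 0
      map_add' := by
        intro α β
        funext w
        simp only [Pi.add_apply]
        rw [← Finset.sum_add_distrib]
        exact Finset.sum_congr rfl (fun c _ => by split <;> simp)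
      map_smul' := by
        intro m α
        funext w
        simp only [Pi.smul_apply, smul_eq_mul, RingHom.id_apply]
        rw [Finset.mul_sum]
        exact Finset.sum_congr rfl (fun c _ => by split <;> simp) }
  have hinj : Function.Injective Φ := by
    rw [injective_iff_map_eq_zero]
    intro α hα
    by_contra hne
    have hsupp : (Finset.univ.filter (fun c => α c ≠ 0)).Nonempty := by
      rcases Function.ne_iff.1 hne with ⟨w, hw⟩
      exact ⟨w, Finset.mem_filter.2 ⟨Finset.mem_univ w, by simpa using hw⟩⟩
    obtain ⟨m, hm, hmin'⟩ := Finset.exists_minimal hsupp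
    have hmin : ∀ c ∈ Finset.univ.filter (fun c => α c ≠ 0), ¬ c < m :=
      fun c hc hlt => hlt.not_ge (hmin' hc hlt.le)
    have hm0 : α m ≠ 0 := (Finset.mem_filter.1 hm).2
    have hΦ : Φ α m = α m := by
      show (∑ c : ι, if c ≤ m then α c else 0) = α m
      rw [Finset.sum_eq_single m]
      · simp
      · intro c _ hcm
        by_cases hcle : c ≤ m
        · have hc0 : α c = 0 := by
            by_contra h0
            exact hmin c (Finset.mem_filter.2 ⟨Finset.mem_univ c, h0⟩)
              (lt_of_le_of_ne hcle hcm)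
          simp [hcle, hc0]
        · simp [hcle]
      · intro hmem
        exact absurd (Finset.mem_univ m) hmem
    rw [hα] at hΦ
    exact hm0 (by simpa using hΦ.symm)
  obtain ⟨α, hα⟩ := LinearMap.injective_iff_surjective.1 hinj v
  exact ⟨α, fun w => congrFun hα w⟩

end AuxHAL

/-- a function on the unit cube taking finitely many values which is not
(on the cube) a finite linear combination of indicators of upper boxes is not càdlàg. -/
theorem not_cadlag_of_finite_valued_not_in_span
    (d : ℕ) (hd : 1 ≤ d) (K : Set ℝ) (hK : K.Finite)
    (f : (Fin d → ℝ) → ℝ)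
    (hfK : ∀ x ∈ Set.Icc (0 : Fin d → ℝ) 1, f x ∈ K)
    (hns : ¬ ∃ g ∈ HAL.spanF d, Set.EqOn f g (Set.Icc (0 : Fin d → ℝ) 1)) :
    ¬ HAL.IsCadlag d f := by
  intro hc
  apply hns
  classical
  -- local pattern-constancy radius at every point
  have hpat : ∀ u : Fin d → ℝ, ∃ δ > 0, u ∈ Set.Icc (0 : Fin d → ℝ) 1 →
      ∀ y ∈ Set.Icc (0 : Fin d → ℝ) 1, ∀ z ∈ Set.Icc (0 : Fin d → ℝ) 1,
        dist y u < δ → dist z u < δ → (∀ k, u k ≤ y k ↔ u k ≤ z k) → f y = f z := by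
    intro u
    by_cases hu : u ∈ Set.Icc (0 : Fin d → ℝ) 1
    · obtain ⟨δ, hδ1, hδ2⟩ := HALaux.pattern_const hK hfK hc hu
      exact ⟨δ, hδ1, fun _ => hδ2⟩
    · exact ⟨1, one_pos, fun h => absurd h hu⟩
  choose δ hδpos hδ using hpat
  -- compactness: finite subcover
  obtain ⟨t, ht1, ht2⟩ := isCompact_Icc.elim_nhds_subcover (fun u => Metric.ball u (δ u))
    (fun x _ => Metric.ball_mem_nhds x (hδpos x))
  -- the grid
  set T : Fin d → Finset ℝ := fun k => insert 0 (t.image fun u => u k) with hTdef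
  have hT0 : ∀ k, (0:ℝ) ∈ T k := fun k => Finset.mem_insert_self _ _
  have hTbound : ∀ k, ∀ s ∈ T k, 0 ≤ s ∧ s ≤ 1 := by
    intro k s hs
    rcases Finset.mem_insert.1 hs with rfl | hs'
    · exact ⟨le_refl 0, zero_le_one⟩
    · obtain ⟨u, hu, rfl⟩ := Finset.mem_image.1 hs'
      have hu' := ht1 u hu
      exact ⟨by simpa using hu'.1 k, by simpa using hu'.2 k⟩
  have hTu : ∀ u ∈ t, ∀ k, u k ∈ T k := fun u hu k =>
    Finset.mem_insert_of_mem (Finset.mem_image.2 ⟨u, hu, rfl⟩)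
  -- the lower grid corner of a point
  set C : (Fin d → ℝ) → (Fin d → ℝ) := fun y k =>
    (insert 0 ((T k).filter (fun s => s ≤ y k))).max' (Finset.insert_nonempty _ _) with hCdef
  have hCle : ∀ y : Fin d → ℝ, (0:Fin d → ℝ) ≤ y → ∀ k, C y k ≤ y k := by
    intro y h0 k
    apply Finset.max'_le
    intro s hs
    rcases Finset.mem_insert.1 hs with rfl | hs'
    · simpa using h0 k
    · exact (Finset.mem_filter.1 hs').2
  have hCmemT : ∀ (y : Fin d → ℝ) (k : Fin d), C y k ∈ T k := by
    intro y k
    have hmem := Finset.max'_mem (insert 0 ((T k).filter (fun s => s ≤ y k)))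
      (Finset.insert_nonempty _ _)
    have hCy : C y k = (insert 0 ((T k).filter (fun s => s ≤ y k))).max'
        (Finset.insert_nonempty _ _) := rfl
    rcases Finset.mem_insert.1 hmem with h | h
    · rw [hCy, h]; exact hT0 k
    · rw [hCy]; exact (Finset.mem_filter.1 h).1
  have hCge : ∀ (y : Fin d → ℝ) (k : Fin d) (q : ℝ), q ∈ T k → q ≤ y k → q ≤ C y k := by
    intro y k q hq hqy
    exact Finset.le_max' (insert 0 ((T k).filter (fun r => r ≤ y k))) q
      (Finset.mem_insert_of_mem (Finset.mem_filter.2 ⟨hq, hqy⟩))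
  have hCcube : ∀ y ∈ Set.Icc (0 : Fin d → ℝ) 1, C y ∈ Set.Icc (0 : Fin d → ℝ) 1 := by
    intro y hy
    refine ⟨fun k => ?_, fun k => ?_⟩
    · simpa using (hTbound k _ (hCmemT y k)).1
    · have := le_trans (hCle y hy.1 k) (by simpa using hy.2 k : y k ≤ 1)
      simpa using this
  have hCleP : ∀ y ∈ Set.Icc (0 : Fin d → ℝ) 1, C y ≤ y := fun y hy k => hCle y hy.1 k
  -- key: f y = f (C y) on the cube
  have key : ∀ y ∈ Set.Icc (0 : Fin d → ℝ) 1, f y = f (C y) := by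
    intro y hy
    set c : Fin d → ℝ := C y with hcdef
    have hcy : c ≤ y := hCleP y hy
    have hcIcc : Set.Icc c y ⊆ Set.Icc (0 : Fin d → ℝ) 1 := fun z hz =>
      ⟨le_trans (hCcube y hy).1 hz.1, le_trans hz.2 hy.2⟩
    -- local constancy on Icc c y
    have loc : ∀ z ∈ Set.Icc c y, ∃ r > 0, ∀ w ∈ Set.Icc c y, dist w z < r → f w = f z := by
      intro z hz
      have hzc : z ∈ Set.Icc (0 : Fin d → ℝ) 1 := hcIcc hz
      obtain ⟨u, hu, hzu⟩ := Set.mem_iUnion₂.1 (ht2 hzc)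
      refine ⟨δ u - dist z u, by simpa [sub_pos] using hzu, ?_⟩
      intro w hw hwz
      have hwc : w ∈ Set.Icc (0 : Fin d → ℝ) 1 := hcIcc hw
      have hwu : dist w u < δ u := by
        calc dist w u ≤ dist w z + dist z u := dist_triangle w z u
        _ < (δ u - dist z u) + dist z u := by linarith
        _ = δ u := by ring
      have hzu' : dist z u < δ u := by simpa using hzu
      have hpattern : ∀ k, u k ≤ w k ↔ u k ≤ z k := by
        intro k
        by_cases hk : u k ≤ c k
        · constructor <;> intro _
          · exact le_trans hk (hz.1 k)
          · exact le_trans hk (hw.1 k)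
        · have hky : ¬ u k ≤ y k := fun hle => hk (hCge y k (u k) (hTu u hu k) hle)
          constructor <;> intro hle
          · exact absurd (le_trans hle (hw.2 k)) hky
          · exact absurd (le_trans hle (hz.2 k)) hky
      exact hδ u (ht1 u hu) w hwc z hzc hwu hzu' hpattern
    choose r hrpos hr using loc
    -- connectedness argument
    have hpc : IsPreconnected (Set.Icc c y) := (convex_Icc c y).isPreconnected
    by_contra hne
    have hne' : f y ≠ f c := hne
    set U : Set (Fin d → ℝ) :=
      ⋃ (z : Fin d → ℝ) (h : z ∈ Set.Icc c y) (_ : f z = f c), Metric.ball z (r z h) with hU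
    set V : Set (Fin d → ℝ) :=
      ⋃ (z : Fin d → ℝ) (h : z ∈ Set.Icc c y) (_ : f z ≠ f c), Metric.ball z (r z h) with hV
    have hUopen : IsOpen U := isOpen_iUnion (fun z => isOpen_iUnion (fun h =>
      isOpen_iUnion (fun _ => Metric.isOpen_ball)))
    have hVopen : IsOpen V := isOpen_iUnion (fun z => isOpen_iUnion (fun h =>
      isOpen_iUnion (fun _ => Metric.isOpen_ball)))
    have hcover : Set.Icc c y ⊆ U ∪ V := by
      intro z hz
      by_cases hfz : f z = f c
      · exact Or.inl (Set.mem_iUnion.2 ⟨z, Set.mem_iUnion.2 ⟨hz, Set.mem_iUnion.2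
          ⟨hfz, Metric.mem_ball_self (hrpos z hz)⟩⟩⟩)
      · exact Or.inr (Set.mem_iUnion.2 ⟨z, Set.mem_iUnion.2 ⟨hz, Set.mem_iUnion.2
          ⟨hfz, Metric.mem_ball_self (hrpos z hz)⟩⟩⟩)
    have hPU : ∀ w ∈ Set.Icc c y, w ∈ U → f w = f c := by
      intro w hw hwU
      obtain ⟨z, hz⟩ := Set.mem_iUnion.1 hwU
      obtain ⟨hzm, hz'⟩ := Set.mem_iUnion.1 hz
      obtain ⟨hfz, hball⟩ := Set.mem_iUnion.1 hz'
      have := hr z hzm w hw (Metric.mem_ball.1 hball)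
      rw [this, hfz]
    have hPV : ∀ w ∈ Set.Icc c y, w ∈ V → f w ≠ f c := by
      intro w hw hwV
      obtain ⟨z, hz⟩ := Set.mem_iUnion.1 hwV
      obtain ⟨hzm, hz'⟩ := Set.mem_iUnion.1 hz
      obtain ⟨hfz, hball⟩ := Set.mem_iUnion.1 hz'
      have := hr z hzm w hw (Metric.mem_ball.1 hball)
      rw [this]; exact hfz
    have hcmem : c ∈ Set.Icc c y := ⟨le_refl c, hcy⟩
    have hymem : y ∈ Set.Icc c y := ⟨hcy, le_refl y⟩
    have hUne : (Set.Icc c y ∩ U).Nonempty := by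
      refine ⟨c, hcmem, Set.mem_iUnion.2 ⟨c, Set.mem_iUnion.2 ⟨hcmem, Set.mem_iUnion.2
        ⟨rfl, Metric.mem_ball_self (hrpos c hcmem)⟩⟩⟩⟩
    have hVne : (Set.Icc c y ∩ V).Nonempty := by
      refine ⟨y, hymem, Set.mem_iUnion.2 ⟨y, Set.mem_iUnion.2 ⟨hymem, Set.mem_iUnion.2
        ⟨hne', Metric.mem_ball_self (hrpos y hymem)⟩⟩⟩⟩
    obtain ⟨w, hwIcc, hwU, hwV⟩ := hpc U V hUopen hVopen hcover hUne hVne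
    exact hPV w hwIcc hwV (hPU w hwIcc hwU)
  -- the grid as a finite partially ordered type
  obtain ⟨α, hα⟩ := HALaux.exists_inversion
    (ι := {c : Fin d → ℝ // c ∈ Fintype.piFinset T}) (fun c => f c.1)
  have hmemcube : ∀ c : {c : Fin d → ℝ // c ∈ Fintype.piFinset T},
      c.1 ∈ Set.Icc (0 : Fin d → ℝ) 1 := by
    intro c
    have hmem := Fintype.mem_piFinset.1 c.2
    exact ⟨fun k => by simpa using (hTbound k _ (hmem k)).1,
      fun k => by simpa using (hTbound k _ (hmem k)).2⟩
  refine ⟨∑ c : {c : Fin d → ℝ // c ∈ Fintype.piFinset T}, α c • HAL.upperBoxIndicator d c.1,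
    ?_, ?_⟩
  · exact Submodule.sum_mem _ (fun c _ => Submodule.smul_mem _ _
      (Submodule.subset_span ⟨c.1, hmemcube c, rfl⟩))
  · intro y hy
    have hCw : C y ∈ Fintype.piFinset T := Fintype.mem_piFinset.2 (fun k => hCmemT y k)
    set w : {c : Fin d → ℝ // c ∈ Fintype.piFinset T} := ⟨C y, hCw⟩ with hwdef
    have hiff : ∀ c : {c : Fin d → ℝ // c ∈ Fintype.piFinset T}, (c.1 ≤ y ↔ c ≤ w) := by
      intro c
      constructor
      · intro h k
        exact hCge y k (c.1 k) (Fintype.mem_piFinset.1 c.2 k) (h k)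
      · intro h
        exact le_trans h (hCleP y hy)
    have hval : ∀ c : {c : Fin d → ℝ // c ∈ Fintype.piFinset T},
        HAL.upperBoxIndicator d c.1 y = if c ≤ w then (1:ℝ) else 0 := by
      intro c
      rw [HAL.upperBoxIndicator, Set.indicator_apply]
      by_cases h : c ≤ w
      · rw [if_pos h, if_pos]
        exact ⟨(hiff c).2 h, hy.2⟩
      · rw [if_neg h, if_neg]
        intro hmem
        exact h ((hiff c).1 hmem.1)
    calc f y = f (C y) := key y hy
    _ = ∑ c : {c : Fin d → ℝ // c ∈ Fintype.piFinset T}, if c ≤ w then α c else 0 :=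
        (hα w).symm
    _ = (∑ c : {c : Fin d → ℝ // c ∈ Fintype.piFinset T},
          α c • HAL.upperBoxIndicator d c.1) y := by
        rw [Finset.sum_apply]
        refine Finset.sum_congr rfl (fun c _ => ?_)
        rw [Pi.smul_apply, smul_eq_mul, hval c]
        split <;> simp
end
end
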